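/- arXiv:2112.04118 — 8 statements merged into one kernel-verified Lean document; each statement's English description precedes it below -/
import Mathlib

section
/- Let C be an (n,k) convolutional code over a finite field F with degree δ. Then the free distance d = min{ wt(v(D)) : v(D) ∈ C, v(D) ≠ 0 } satisfies d ≤ (n-k)(⌊δ/k⌋ + 1) + δ + 1. -/
/-!
Among the generator matrices `U * G` with `U` unimodular, take one whose row degrees `νᵢ` have
minimal sum. Its leading row coefficient matrix then has independent rows (a dependency would
give a row combination of lower degree), so `∑ νᵢ` is the degree of one of its full minors, which
is `det U` (a nonzero constant) times a minor of `G`; hence `∑ νᵢ ≤ δ`. With `N = ⌊δ/k⌋ + 1`,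
the codewords `D^t gᵢ` with `t < N - νᵢ` are `F`-linearly independent, at least `kN - δ > 0` in
number, and have all their coefficients in degrees `< N`. Their span is thus a linear block code
of length `nN` and dimension `≥ kN - δ`, and the Singleton bound gives a nonzero codeword of weight
`≤ nN - (kN - δ) + 1`.
-/

open Polynomial Matrix

/-- The weight of a polynomial vector `v(D) ∈ F[D]^n`: the total number of nonzero
coefficients, i.e. `wt(v(D)) = Σ_j wt(v_j)` where `v(D) = Σ_j v_j D^j`. -/
noncomputable def polyWt {F : Type*} [Field F] {n : ℕ} (v : Fin n → Polynomial F) : ℕ :=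
  ∑ a, (v a).support.card

/-- The maximal degree of the `k × k` minors of a `k × n` polynomial matrix. -/
noncomputable def maxMinorDeg {F : Type*} [Field F] {k n : ℕ}
    (G : Matrix (Fin k) (Fin n) (Polynomial F)) : ℕ :=
  Finset.univ.sup fun e : Fin k ↪ Fin n => ((G.submatrix id ⇑e).det).natDegree

namespace Polynomial

theorem coeff_prod_sum_of_natDegree_le {R ι : Type*} [CommSemiring R] {s : Finset ι}
    {f : ι → R[X]} {d : ι → ℕ} (h : ∀ i ∈ s, (f i).natDegree ≤ d i) :
    (∏ i ∈ s, f i).coeff (∑ i ∈ s, d i) = ∏ i ∈ s, (f i).coeff (d i) := by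
  classical
  induction s using Finset.induction_on with
  | empty => simp
  | insert a s ha ih =>
    have hs : ∀ i ∈ s, (f i).natDegree ≤ d i := fun i hi => h i (Finset.mem_insert_of_mem hi)
    rw [Finset.prod_insert ha, Finset.sum_insert ha, Finset.prod_insert ha,
      coeff_mul_add_eq_of_natDegree_le (h a (Finset.mem_insert_self a s))
        ((natDegree_prod_le _ _).trans (Finset.sum_le_sum hs)), ih hs]

end Polynomial

namespace Matrix

variable {m n R K : Type*}

theorem coeff_det_of_natDegree_le [Fintype m] [DecidableEq m] [CommRing R]
    (M : Matrix m m R[X]) {d : m → ℕ} (h : ∀ i j, (M i j).natDegree ≤ d i) :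
    M.det.coeff (∑ i, d i) = (of fun i j => (M i j).coeff (d i)).det := by
  simp only [det_apply, finsetSum_coeff, coeff_smul, of_apply]
  refine Finset.sum_congr rfl fun σ _ => ?_
  rw [← Equiv.sum_comp σ d, coeff_prod_sum_of_natDegree_le fun i _ => h (σ i) i]

theorem det_one_updateRow [Fintype m] [DecidableEq m] [CommRing R] (i : m) (q : m → R) :
    ((1 : Matrix m m R).updateRow i q).det = q i := by
  have hq : ∑ j, q j • (1 : Matrix m m R) j = q := by
    ext l; simp [one_apply]
  simpa [hq] using det_updateRow_sum (1 : Matrix m m R) i q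

theorem exists_det_submatrix_ne_zero [Fintype m] [DecidableEq m] [Fintype n] [Field K]
    (L : Matrix m n K) (hL : LinearIndependent K L.row) :
    ∃ e : m ↪ n, (L.submatrix id e).det ≠ 0 := by
  obtain ⟨κ, a, ha, hspan, hli⟩ := exists_linearIndependent' K L.col
  have htop : Submodule.span K (Set.range L.col) = ⊤ := by
    apply Submodule.eq_top_of_finrank_eq
    rw [← rank_eq_finrank_span_cols, hL.rank_matrix, Module.finrank_fintype_fun_eq_card]
  have : Finite κ := Finite.of_injective a ha
  have : Fintype κ := Fintype.ofFinite κ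
  let b := Module.Basis.mk hli (by rw [hspan, htop])
  have hcard : Fintype.card m = Fintype.card κ := by
    rw [← Module.finrank_fintype_fun_eq_card (R := K), Module.finrank_eq_card_basis b]
  let σ := Fintype.equivOfCardEq hcard
  refine ⟨⟨a ∘ σ, ha.comp σ.injective⟩, ?_⟩
  have hcols : LinearIndependent K (L.submatrix id (a ∘ σ)).col := hli.comp σ σ.injective
  exact (isUnit_iff_isUnit_det _).mp (linearIndependent_cols_iff_isUnit.mp hcols) |>.ne_zero

theorem vecMul_mul_injective_of_isUnit_det [Fintype m] [DecidableEq m] [CommRing R]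
    {U : Matrix m m R} {W : Matrix m n R} (hU : IsUnit U.det) (hW : Function.Injective W.vecMul) :
    Function.Injective (U * W).vecMul := by
  have h : (U * W).vecMul = W.vecMul ∘ U.vecMul := funext fun v => (vecMul_vecMul v U W).symm
  rw [h]
  exact hW.comp (vecMul_injective_of_isUnit ((isUnit_iff_isUnit_det U).mpr hU))

theorem vecMul_injective_of_rank_range_eq [CommRing R] [IsDomain R] [IsPrincipalIdealRing R]
    {k : ℕ} (G : Matrix (Fin k) n R)
    (h : Module.rank R (LinearMap.range G.vecMulLinear) = k) : Function.Injective G.vecMul := by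
  have hf := OrzechProperty.bijective_of_surjective_of_finrank_le G.vecMulLinear.rangeRestrict
    G.vecMulLinear.surjective_rangeRestrict (by rw [Module.finrank_eq_of_rank_eq h]; simp)
  exact fun x y hxy => hf.1 (Subtype.ext hxy)

end Matrix

section RowDegree

variable {m n R K : Type*} [Fintype n]

noncomputable def rowDegree [Semiring R] (v : n → R[X]) : ℕ :=
  Finset.univ.sup fun j => (v j).natDegree

noncomputable def leadingRowCoeffMatrix [Semiring R] (W : Matrix m n R[X]) : Matrix m n R :=
  of fun i j => (W i j).coeff (rowDegree (W i))

theorem natDegree_le_rowDegree [Semiring R] (v : n → R[X]) (j : n) :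
    (v j).natDegree ≤ rowDegree v :=
  Finset.le_sup (f := fun j => (v j).natDegree) (Finset.mem_univ j)

theorem rowDegree_lt_of_coeff_eq_zero [Semiring R] {v : n → R[X]} {d : ℕ} (hv : v ≠ 0)
    (hdeg : ∀ j, (v j).natDegree ≤ d) (hcoeff : ∀ j, (v j).coeff d = 0) :
    rowDegree v < d := by
  have hlt : ∀ j, v j ≠ 0 → (v j).natDegree < d := fun j hj =>
    (hdeg j).lt_of_ne fun h => hj (leadingCoeff_eq_zero.mp (by rw [leadingCoeff, h, hcoeff j]))
  obtain ⟨j₀, hj₀⟩ := Function.ne_iff.mp hv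
  have hd : 0 < d := (Nat.zero_le _).trans_lt (hlt j₀ hj₀)
  refine (Finset.sup_lt_iff hd).mpr fun j _ => ?_
  by_cases hj : v j = 0
  · simpa [hj] using hd
  · exact hlt j hj

variable [Fintype m]

/-- Each entry of the combination has degree `≤ μ = rowDegree (W i₀)`, and its coefficient in
degree `μ` is the corresponding entry of `g ᵥ* leadingRowCoeffMatrix W = 0`. -/
theorem rowDegree_vecMul_lt [Field K] (W : Matrix m n K[X]) (hW : Function.Injective W.vecMul)
    {g : m → K} (hg : g ᵥ* leadingRowCoeffMatrix W = 0) {i₀ : m} (hi₀ : g i₀ ≠ 0)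
    (hmax : ∀ i, g i ≠ 0 → rowDegree (W i) ≤ rowDegree (W i₀)) :
    rowDegree ((fun i => C (g i) * X ^ (rowDegree (W i₀) - rowDegree (W i))) ᵥ* W) <
      rowDegree (W i₀) := by
  set μ := rowDegree (W i₀)
  set q : m → K[X] := fun i => C (g i) * X ^ (μ - rowDegree (W i))
  have hterm : ∀ i j, (q i * W i j).natDegree ≤ μ ∧
      (q i * W i j).coeff μ = g i * leadingRowCoeffMatrix W i j := by
    intro i j
    by_cases hgi : g i = 0
    · simp [q, hgi]
    have hle := hmax i hgi
    have hWij := natDegree_le_rowDegree (W i) j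
    refine ⟨?_, ?_⟩
    · calc (q i * W i j).natDegree ≤ (μ - rowDegree (W i)) + rowDegree (W i) := by
            simp only [q, mul_assoc]
            exact (natDegree_C_mul_le _ _).trans
              (natDegree_mul_le_of_le (natDegree_X_pow_le _) hWij)
        _ = μ := Nat.sub_add_cancel hle
    · simp only [q, mul_assoc, coeff_C_mul, coeff_X_pow_mul', if_pos (Nat.sub_le _ _),
        Nat.sub_sub_self hle, leadingRowCoeffMatrix, of_apply]
  have hq : q ≠ 0 := Function.ne_iff.mpr ⟨i₀, by simpa [q] using hi₀⟩
  apply rowDegree_lt_of_coeff_eq_zero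
  · simpa using hW.ne hq
  · exact fun j => natDegree_sum_le_of_forall_le _ _ fun i _ => (hterm i j).1
  · intro j
    simp only [vecMul, dotProduct, finsetSum_coeff, fun i => (hterm i j).2]
    simpa [vecMul, dotProduct] using congrFun hg j

variable [DecidableEq m]

theorem exists_sum_rowDegree_le_natDegree_det [Field K] (W : Matrix m n K[X])
    (hL : LinearIndependent K (leadingRowCoeffMatrix W).row) :
    ∃ e : m ↪ n, ∑ i, rowDegree (W i) ≤ (W.submatrix id e).det.natDegree := by
  obtain ⟨e, he⟩ := exists_det_submatrix_ne_zero _ hL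
  refine ⟨e, le_natDegree_of_ne_zero ?_⟩
  rw [coeff_det_of_natDegree_le (W.submatrix id e) (d := fun i => rowDegree (W i))
    fun i j => natDegree_le_rowDegree (W i) (e j)]
  exact he

theorem exists_isUnit_det_sum_rowDegree_mul_lt [Field K] (W : Matrix m n K[X])
    (hW : Function.Injective W.vecMul)
    (hL : ¬ LinearIndependent K (leadingRowCoeffMatrix W).row) :
    ∃ V : Matrix m m K[X], IsUnit V.det ∧ ∑ i, rowDegree ((V * W) i) < ∑ i, rowDegree (W i) := by
  classical
  obtain ⟨g, hg, i₁, hi₁⟩ := Fintype.not_linearIndependent_iff.mp hL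
  obtain ⟨i₀, hi₀, hmax⟩ := Finset.exists_max_image {i | g i ≠ 0} (fun i => rowDegree (W i))
    ⟨i₁, by simpa using hi₁⟩
  simp only [Finset.mem_filter, Finset.mem_univ, true_and] at hi₀ hmax
  set q : m → K[X] := fun i => C (g i) * X ^ (rowDegree (W i₀) - rowDegree (W i))
  refine ⟨(1 : Matrix m m K[X]).updateRow i₀ q, ?_, ?_⟩
  · simpa [det_one_updateRow, q] using hi₀.isUnit
  rw [updateRow_mul, Matrix.one_mul]
  refine Finset.sum_lt_sum (fun i _ => ?_) ⟨i₀, Finset.mem_univ _, ?_⟩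
  · rcases eq_or_ne i i₀ with rfl | hi
    · simpa [q] using (rowDegree_vecMul_lt W hW (vecMul_eq_sum g _ ▸ hg) hi₀ hmax).le
    · simp [hi]
  · simpa [q] using rowDegree_vecMul_lt W hW (vecMul_eq_sum g _ ▸ hg) hi₀ hmax

theorem exists_isUnit_det_linearIndependent_leadingRowCoeffMatrix [Field K]
    (G : Matrix m n K[X]) (hG : Function.Injective G.vecMul) :
    ∃ U : Matrix m m K[X], IsUnit U.det ∧
      LinearIndependent K (leadingRowCoeffMatrix (U * G)).row := by
  obtain ⟨U, hU, hmin⟩ := (InvImage.wf (fun U : Matrix m m K[X] => ∑ i, rowDegree ((U * G) i))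
    wellFounded_lt).has_min {U | IsUnit U.det} ⟨1, by simp⟩
  refine ⟨U, hU, by_contra fun hL => ?_⟩
  obtain ⟨V, hV, hlt⟩ := exists_isUnit_det_sum_rowDegree_mul_lt (U * G)
    (vecMul_mul_injective_of_isUnit_det hU hG) hL
  exact hmin (V * U) (by simpa [det_mul] using hV.mul hU) (by rwa [InvImage, Matrix.mul_assoc])

end RowDegree

theorem exists_isUnit_det_sum_rowDegree_le_maxMinorDeg {K : Type*} [Field K] {k n : ℕ}
    (G : Matrix (Fin k) (Fin n) K[X]) (hG : Function.Injective G.vecMul) :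
    ∃ U : Matrix (Fin k) (Fin k) K[X], IsUnit U.det ∧
      ∑ i, rowDegree ((U * G) i) ≤ maxMinorDeg G := by
  obtain ⟨U, hU, hL⟩ := exists_isUnit_det_linearIndependent_leadingRowCoeffMatrix G hG
  obtain ⟨e, he⟩ := exists_sum_rowDegree_le_natDegree_det (U * G) hL
  obtain ⟨r, hr, hrU⟩ := Polynomial.isUnit_iff.mp hU
  have hsub : (U * G).submatrix id e = U * G.submatrix id e := by
    ext i j; simp [mul_apply]
  refine ⟨U, hU, he.trans ?_⟩
  rw [hsub, det_mul, ← hrU, natDegree_C_mul_of_isUnit hr]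
  exact Finset.le_sup (f := fun e : Fin k ↪ Fin n => (G.submatrix id e).det.natDegree)
    (Finset.mem_univ e)

theorem Submodule.exists_ne_zero_hammingNorm_add_finrank_le {K ι : Type*} [Field K]
    [DecidableEq K] [Fintype ι] (U : Submodule K (ι → K)) (hU : 0 < Module.finrank K U) :
    ∃ u ∈ U, u ≠ 0 ∧ hammingNorm u + Module.finrank K U ≤ Fintype.card ι + 1 := by
  classical
  set r := Module.finrank K U
  have hr : r ≤ Fintype.card ι := U.finrank_le.trans (Module.finrank_fintype_fun_eq_card K).le
  obtain ⟨S, -, hS⟩ := Finset.exists_subset_card_eq (s := (Finset.univ : Finset ι)) (n := r - 1)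
    (by rw [Finset.card_univ]; omega)
  let π : U →ₗ[K] (S → K) := LinearMap.funLeft K K (Subtype.val : S → ι) ∘ₗ U.subtype
  have hker : LinearMap.ker π ≠ ⊥ := LinearMap.ker_ne_bot_of_finrank_lt (by
    rw [Module.finrank_fintype_fun_eq_card K, Fintype.card_coe, hS]; omega)
  obtain ⟨u, hu, hu0⟩ := (Submodule.ne_bot_iff _).mp hker
  have hsupp : (Finset.univ.filter fun i => (u : ι → K) i ≠ 0) ⊆ Sᶜ := fun i hi =>
    Finset.mem_compl.mpr fun hiS => (Finset.mem_filter.mp hi).2 (congrFun hu ⟨i, hiS⟩)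
  refine ⟨u, u.2, fun h => hu0 (Subtype.ext h), ?_⟩
  have hcard := Finset.card_le_card hsupp
  rw [Finset.card_compl, hS] at hcard
  unfold hammingNorm
  omega

noncomputable def polyCoeffs (K n : Type*) [Semiring K] (N : ℕ) :
    (n → K[X]) →ₗ[K] (n × Fin N → K) :=
  LinearMap.pi fun p => lcoeff K (p.2 : ℕ) ∘ₗ LinearMap.proj p.1

theorem card_support_eq_card_filter_coeff_ne_zero {K : Type*} [Semiring K] [DecidableEq K]
    {N : ℕ} {p : K[X]} (hp : p.degree < N) :
    p.support.card = (Finset.univ.filter fun t : Fin N => p.coeff t ≠ 0).card := by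
  rw [← Finset.card_map Fin.valEmbedding]
  congr 1
  ext t
  simp only [mem_support_iff, Finset.mem_map, Finset.mem_filter, Finset.mem_univ, true_and,
    Fin.valEmbedding_apply]
  refine ⟨fun h => ⟨⟨t, ?_⟩, h, rfl⟩, fun ⟨_, h, ht⟩ => ht ▸ h⟩
  by_contra ht
  exact h (coeff_eq_zero_of_degree_lt (hp.trans_le (by exact_mod_cast not_lt.mp ht)))

theorem polyWt_eq_hammingNorm_polyCoeffs {K : Type*} [Field K] [DecidableEq K] {n N : ℕ}
    {v : Fin n → K[X]} (hv : ∀ j, (v j).degree < N) :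
    polyWt v = hammingNorm (polyCoeffs K (Fin n) N v) := by
  rw [polyWt, hammingNorm, Finset.card_filter, Fintype.sum_prod_type]
  refine Finset.sum_congr rfl fun j _ => ?_
  rw [card_support_eq_card_filter_coeff_ne_zero (hv j), Finset.card_filter]
  rfl

theorem exists_ne_zero_polyWt_add_finrank_le {K : Type*} [Field K] {n N : ℕ}
    (V : Submodule K (Fin n → K[X])) (hV : V ≤ Submodule.pi Set.univ fun _ => degreeLT K N)
    (hV0 : 0 < Module.finrank K V) :
    ∃ v ∈ V, v ≠ 0 ∧ polyWt v + Module.finrank K V ≤ n * N + 1 := by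
  classical
  have hdeg : ∀ v ∈ V, ∀ j, (v j).degree < N := fun v hv j =>
    mem_degreeLT.mp ((Submodule.mem_pi.mp (hV hv)) j trivial)
  set f := polyCoeffs K (Fin n) N ∘ₗ V.subtype
  have hf : Function.Injective f := by
    refine (injective_iff_map_eq_zero f).mpr fun v hv => Subtype.ext (funext fun j => ?_)
    ext t
    by_cases ht : t < N
    · simpa [f, polyCoeffs] using congrFun hv (j, ⟨t, ht⟩)
    · exact coeff_eq_zero_of_degree_lt ((hdeg v v.2 j).trans_le (by exact_mod_cast not_lt.mp ht))
  have hrank : Module.finrank K (LinearMap.range f) = Module.finrank K V :=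
    LinearMap.finrank_range_of_inj hf
  obtain ⟨u, ⟨v, rfl⟩, hu0, hwt⟩ :=
    (LinearMap.range f).exists_ne_zero_hammingNorm_add_finrank_le (hrank ▸ hV0)
  refine ⟨v, v.2, fun h => hu0 (by simp [f, h]), ?_⟩
  rw [polyWt_eq_hammingNorm_polyCoeffs (hdeg v v.2)]
  rw [hrank, Fintype.card_prod, Fintype.card_fin, Fintype.card_fin] at hwt
  exact hwt

section ShiftedRows

variable {K : Type*} [Field K] {m n : Type*} [Fintype n]

/-- Row `i` contributes no shifts when `rowDegree (W i) ≥ N` (truncated subtraction). -/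
noncomputable def shiftedRows (W : Matrix m n K[X]) (N : ℕ) :
    (Σ i : m, Fin (N - rowDegree (W i))) → (n → K[X]) :=
  fun p => (X : K[X]) ^ (p.2 : ℕ) • W p.1

theorem linearIndependent_shiftedRows {W : Matrix m n K[X]} (hW : LinearIndependent K[X] W.row)
    (N : ℕ) : LinearIndependent K (shiftedRows W N) := by
  have hX : LinearIndependent K fun t : ℕ => (X : K[X]) ^ t := by
    have h := (basisMonomials K).linearIndependent
    rw [coe_basisMonomials] at h
    simpa only [monomial_one_right_eq_X_pow] using h
  have h2 := linearIndependent_smul hX hW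
  have hinj : Function.Injective
      fun p : (Σ i : m, Fin (N - rowDegree (W i))) => ((p.2 : ℕ), p.1) := by
    rintro ⟨i, t⟩ ⟨i', t'⟩ h
    simp only [Prod.mk.injEq] at h
    obtain ⟨ht, rfl⟩ := h
    rw [Fin.ext ht]
  exact (h2.comp _ hinj :)

theorem shiftedRows_mem_range_vecMulLinear [Fintype m] (W : Matrix m n K[X]) (N : ℕ) (p) :
    shiftedRows W N p ∈ LinearMap.range W.vecMulLinear := by
  rw [range_vecMulLinear]
  exact Submodule.smul_mem _ _ (Submodule.subset_span ⟨p.1, rfl⟩)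

theorem degree_shiftedRows_lt (W : Matrix m n K[X]) (N : ℕ) (p) (j : n) :
    (shiftedRows W N p j).degree < N := by
  obtain ⟨i, t⟩ := p
  simp only [shiftedRows, Pi.smul_apply, smul_eq_mul]
  have hdeg : (X ^ (t : ℕ) * W i j).natDegree < N := by
    have hW := natDegree_le_rowDegree (W i) j
    have ht := t.2
    exact (natDegree_mul_le_of_le (natDegree_X_pow_le _) le_rfl).trans_lt (by omega)
  exact degree_le_natDegree.trans_lt (by exact_mod_cast hdeg)

end ShiftedRows

theorem exists_mem_range_polyWt_add_le {K : Type*} [Field K] {k n N : ℕ}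
    (W : Matrix (Fin k) (Fin n) K[X]) (hW : Function.Injective W.vecMul)
    (hN : ∑ i, rowDegree (W i) < k * N) :
    ∃ v ∈ LinearMap.range W.vecMulLinear, v ≠ 0 ∧
      polyWt v + k * N ≤ n * N + ∑ i, rowDegree (W i) + 1 := by
  set V := Submodule.span K (Set.range (shiftedRows W N))
  have hV : Module.finrank K V = ∑ i, (N - rowDegree (W i)) := by
    rw [finrank_span_eq_card (linearIndependent_shiftedRows (vecMul_injective_iff.mp hW) N)]
    simp
  have hkN : k * N ≤ ∑ i, (N - rowDegree (W i)) + ∑ i, rowDegree (W i) :=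
    calc k * N = ∑ _i : Fin k, N := by simp
      _ ≤ ∑ i, (N - rowDegree (W i) + rowDegree (W i)) := Finset.sum_le_sum fun i _ => le_tsub_add
      _ = _ := Finset.sum_add_distrib
  obtain ⟨v, hvV, hv0, hwt⟩ := exists_ne_zero_polyWt_add_finrank_le V
    (Submodule.span_le.mpr <| Set.range_subset_iff.mpr fun p j _ =>
      mem_degreeLT.mpr (degree_shiftedRows_lt W N p j)) (by omega)
  have hVC : V ≤ (LinearMap.range W.vecMulLinear).restrictScalars K :=
    Submodule.span_le.mpr <| Set.range_subset_iff.mpr (shiftedRows_mem_range_vecMulLinear W N)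
  exact ⟨v, hVC hvV, hv0, by omega⟩

theorem free_distance_singleton_bound_general {F : Type*} [Field F] {n k δ : ℕ}
    (hk : 0 < k) (hkn : k ≤ n)
    (C : Submodule (Polynomial F) (Fin n → Polynomial F))
    (hrank : Module.rank (Polynomial F) C = k)
    (G : Matrix (Fin k) (Fin n) (Polynomial F))
    (hgen : C = LinearMap.range (Matrix.vecMulLinear G))
    (hδ : δ = maxMinorDeg G) :
    sInf {w : ℕ | ∃ v ∈ C, v ≠ 0 ∧ w = polyWt v} ≤ (n - k) * (δ / k + 1) + δ + 1 := by
  subst hgen hδ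
  have hG : Function.Injective G.vecMul := vecMul_injective_of_rank_range_eq G hrank
  obtain ⟨U, hU, hdeg⟩ := exists_isUnit_det_sum_rowDegree_le_maxMinorDeg G hG
  obtain ⟨v, hv, hv0, hwt⟩ := exists_mem_range_polyWt_add_le (N := maxMinorDeg G / k + 1) (U * G)
    (vecMul_mul_injective_of_isUnit_det hU hG) (hdeg.trans_lt (Nat.lt_mul_div_succ _ hk))
  have hvC : v ∈ LinearMap.range G.vecMulLinear := by
    obtain ⟨u, rfl⟩ := LinearMap.mem_range.mp hv
    exact LinearMap.mem_range.mpr ⟨u ᵥ* U, by simp [vecMul_vecMul]⟩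
  have hmem : polyWt v ∈ {w : ℕ | ∃ v ∈ LinearMap.range G.vecMulLinear, v ≠ 0 ∧ w = polyWt v} :=
    ⟨v, hvC, hv0, rfl⟩
  refine (Nat.sInf_le hmem).trans ?_
  have hkN := Nat.mul_le_mul_right (maxMinorDeg G / k + 1) hkn
  rw [Nat.sub_mul]
  omega

/-- The generalized Singleton bound for convolutional codes: an `(n,k)` convolutional code
of degree `δ` has free distance at most `(n-k)(⌊δ/k⌋+1) + δ + 1`. -/
theorem free_distance_singleton_bound {F : Type*} [Field F] [Fintype F] {n k δ : ℕ}
    (hk : 0 < k) (hkn : k ≤ n)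
    (C : Submodule (Polynomial F) (Fin n → Polynomial F))
    (hrank : Module.rank (Polynomial F) C = k)
    (G : Matrix (Fin k) (Fin n) (Polynomial F))
    (hgen : C = LinearMap.range (Matrix.vecMulLinear G))
    (hδ : δ = maxMinorDeg G) :
    sInf {w : ℕ | ∃ v ∈ C, v ≠ 0 ∧ w = polyWt v} ≤ (n - k) * (δ / k + 1) + δ + 1 :=
  free_distance_singleton_bound_general hk hkn C hrank G hgen hδ
end

section
/- Let F be a finite field, k ≤ n, and G_0, G_1, ..., G_m ∈ F^{k×n} with G_0 of rank k. For j ≥ 0 define d_j^c = min{ wt((u_0, ..., u_j) G_j^c) : u_i ∈ F^k, u_0 ≠ 0 }, where wt is the Hamming weight on F^{(j+1)n}. Then d_j^c ≤ (n-k)(j+1) + 1 for every j ≥ 0; moreover, if d_j^c = (n-k)(j+1) + 1 for some j, then d_i^c = (n-k)(i+1) + 1 for all 0 ≤ i ≤ j. -/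
/-!
Fix an information set of `G₀`: `k` coordinates on which `x ↦ x G₀` is bijective (it exists
because `G₀` has rank `k`). Prescribing `x G₀` on it to be a unit vector gives a nonzero
`u₀` whose codeword vanishes on `k - 1` coordinates, so `d₀ ≤ n - k + 1`. Extending an optimal
`(u₀, …, u_j)` by a `u_{j+1}` that cancels the new block on the information set adds at most
`n - k` to the weight, so `d_{j+1} ≤ d_j + (n - k)`. Hence the slack `(n - k)(j + 1) + 1 - d_j`
is nonnegative and nondecreasing in `j`, so if it vanishes at `j` it vanishes at every `i ≤ j`.
-/

open Matrix

/-- The `j`-th truncated generator matrix `G_j^c`: the `(j+1)k × (j+1)n` block matrix whose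
`(r,s)` block is `G_{s-r}` for `s ≥ r` and `0` otherwise. -/
def truncGen {F : Type*} [Field F] {k n : ℕ} (G : ℕ → Matrix (Fin k) (Fin n) F) (j : ℕ) :
    Matrix (Fin (j + 1) × Fin k) (Fin (j + 1) × Fin n) F :=
  Matrix.of fun p c => if (p.1 : ℕ) ≤ (c.1 : ℕ) then G ((c.1 : ℕ) - (p.1 : ℕ)) p.2 c.2 else 0

/-- The `j`-th column distance determined by coefficient matrices `G_0, G_1, ...`:
`d_j^c = min { wt((u_0,…,u_j) G_j^c) : u_0 ≠ 0 }`. -/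
noncomputable def dcolT {F : Type*} [Field F] {k n : ℕ}
    (G : ℕ → Matrix (Fin k) (Fin n) F) (j : ℕ) : ℕ :=
  sInf {w : ℕ | ∃ u : Fin (j + 1) → Fin k → F, u 0 ≠ 0 ∧
    w = Nat.card {c : Fin (j + 1) × Fin n //
          Matrix.vecMul (fun p => u p.1 p.2) (truncGen G j) c ≠ 0}}

section Weight

variable {M ι : Type*} [Zero M] [Fintype ι]

theorem card_ne_zero_le_of_eq_zero {κ : Type*} {v : ι → M} {s : κ → ι}
    (hs : Function.Injective s) (t : Finset κ) (h : ∀ i ∈ t, v (s i) = 0) :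
    Nat.card {c // v c ≠ 0} ≤ Fintype.card ι - t.card := by
  classical
  rw [Nat.card_eq_fintype_card, Fintype.card_subtype, ← Finset.card_map ⟨s, hs⟩,
    ← Finset.card_compl]
  refine Finset.card_le_card fun c hc => Finset.mem_compl.mpr fun hct => ?_
  obtain ⟨i, hi, rfl⟩ := Finset.mem_map.mp hct
  exact (Finset.mem_filter.mp hc).2 (h i hi)

theorem card_ne_zero_prod_eq_sum {κ : Type*} [Finite κ] (v : ι × κ → M) :
    Nat.card {c // v c ≠ 0} = ∑ i, Nat.card {c : κ // v (i, c) ≠ 0} := by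
  rw [← Nat.card_sigma]
  exact Nat.card_congr (Equiv.subtypeProdEquivSigmaSubtype fun i c => v (i, c) ≠ 0)

end Weight

section Increments

variable {d : ℕ → ℕ} {a c : ℕ}

theorem le_add_mul_of_le_add (h0 : d 0 ≤ a) (hs : ∀ j, d (j + 1) ≤ d j + c) (j : ℕ) :
    d j ≤ a + c * j := by
  induction j with
  | zero => simpa using h0
  | succ j ih => rw [Nat.mul_succ]; linarith [hs j]

theorem eq_add_mul_of_le_add (h0 : d 0 ≤ a) (hs : ∀ j, d (j + 1) ≤ d j + c) {j : ℕ}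
    (hj : d j = a + c * j) {i : ℕ} (hij : i ≤ j) : d i = a + c * i := by
  have hslack : Monotone fun j => a + c * j - d j := monotone_nat_of_le_succ fun j => by
    have := hs j
    rw [Nat.mul_succ]
    omega
  have hslack_ij : a + c * i - d i ≤ a + c * j - d j := hslack hij
  have := le_add_mul_of_le_add h0 hs i
  omega

end Increments

theorem Matrix.exists_injective_surjective_vecMul_comp {F m n : Type*} [Field F] [Fintype m]
    [DecidableEq m] [Fintype n] {A : Matrix m n F} (hA : A.rank = Fintype.card m) :
    ∃ s : m → n, Function.Injective s ∧
      Function.Surjective fun x : m → F => (x ᵥ* A) ∘ s := by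
  obtain ⟨κ, a, ha, hspan, hli⟩ := exists_linearIndependent' F A.col
  have : Fintype κ := Fintype.ofInjective a ha
  have hcard : Fintype.card m = Fintype.card κ := by
    rw [← finrank_span_eq_card hli, hspan, ← rank_eq_finrank_span_cols, hA]
  let e : m ≃ κ := Fintype.equivOfCardEq hcard
  have hunit : IsUnit (A.submatrix id (a ∘ e)) :=
    linearIndependent_cols_iff_isUnit.mp (hli.comp e e.injective)
  exact ⟨a ∘ e, ha.comp e.injective, vecMul_surjective_iff_isUnit.mpr hunit⟩

section ColumnDistance

variable {F : Type*} [Field F] {k n : ℕ} (G : ℕ → Matrix (Fin k) (Fin n) F)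

/-- The codeword `(u_0, …, u_j) G_j^c`. -/
def truncCodeword {j : ℕ} (u : Fin (j + 1) → Fin k → F) : Fin (j + 1) × Fin n → F :=
  (fun p : Fin (j + 1) × Fin k => u p.1 p.2) ᵥ* truncGen G j

theorem truncCodeword_apply {j : ℕ} (u : Fin (j + 1) → Fin k → F) (r : Fin (j + 1))
    (c : Fin n) :
    truncCodeword G u (r, c) =
      ∑ p : Fin (j + 1), if (p : ℕ) ≤ r then (u p ᵥ* G (r - p)) c else 0 := by
  simp only [truncCodeword, vecMul, dotProduct, truncGen, of_apply, Fintype.sum_prod_type]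
  refine Finset.sum_congr rfl fun p _ => ?_
  split_ifs <;> simp

theorem truncCodeword_zero (x : Fin k → F) (r : Fin 1) (c : Fin n) :
    truncCodeword G (fun _ => x) (r, c) = (x ᵥ* G 0) c := by
  simp [truncCodeword_apply, Fin.fin_one_eq_zero r]

theorem truncCodeword_snoc_castSucc {j : ℕ} (u : Fin (j + 1) → Fin k → F) (x : Fin k → F)
    (r : Fin (j + 1)) (c : Fin n) :
    truncCodeword G (Fin.snoc u x : Fin (j + 2) → Fin k → F) (r.castSucc, c) =
      truncCodeword G u (r, c) := by
  rw [truncCodeword_apply, truncCodeword_apply, Fin.sum_univ_castSucc,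
    if_neg (by simp [Nat.lt_succ_iff.mp r.isLt]), add_zero]
  simp only [Fin.val_castSucc, Fin.snoc_castSucc]

theorem truncCodeword_snoc_last {j : ℕ} (u : Fin (j + 1) → Fin k → F) (x : Fin k → F)
    (c : Fin n) :
    truncCodeword G (Fin.snoc u x : Fin (j + 2) → Fin k → F) (Fin.last (j + 1), c) =
      ∑ p : Fin (j + 1), (u p ᵥ* G (j + 1 - p)) c + (x ᵥ* G 0) c := by
  rw [truncCodeword_apply, Fin.sum_univ_castSucc]
  simp [Fin.snoc_castSucc, Fin.snoc_last,
    fun p : Fin (j + 1) => Nat.le_succ_of_le (Nat.lt_succ_iff.mp p.isLt)]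

theorem dcolT_le {j : ℕ} {u : Fin (j + 1) → Fin k → F} (hu : u 0 ≠ 0) :
    dcolT G j ≤ Nat.card {c // truncCodeword G u c ≠ 0} :=
  Nat.sInf_le ⟨u, hu, rfl⟩

theorem exists_dcolT_eq (hk : 0 < k) (j : ℕ) :
    ∃ u : Fin (j + 1) → Fin k → F, u 0 ≠ 0 ∧
      dcolT G j = Nat.card {c // truncCodeword G u c ≠ 0} :=
  Nat.sInf_mem (s := {w | ∃ u : Fin (j + 1) → Fin k → F, u 0 ≠ 0 ∧
      w = Nat.card {c // truncCodeword G u c ≠ 0}})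
    ⟨_, fun _ _ => 1, fun h => one_ne_zero (congrFun h ⟨0, hk⟩), rfl⟩

theorem dcolT_zero_le (hk : 0 < k) (hG0 : (G 0).rank = k) : dcolT G 0 ≤ n - k + 1 := by
  obtain ⟨s, hs, hsurj⟩ :=
    exists_injective_surjective_vecMul_comp (hG0.trans (Fintype.card_fin k).symm)
  obtain ⟨x, hx⟩ := hsurj (Pi.single ⟨0, hk⟩ 1)
  have hx0 : x ≠ 0 := by
    rintro rfl
    simpa using congrFun hx ⟨0, hk⟩
  calc dcolT G 0
      ≤ Nat.card {c // truncCodeword G (fun _ => x) c ≠ 0} := dcolT_le G (u := fun _ => x) hx0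
    _ = Nat.card {c // (x ᵥ* G 0) c ≠ 0} := by
        rw [card_ne_zero_prod_eq_sum, Fin.sum_univ_one]
        simp only [truncCodeword_zero]
    _ ≤ Fintype.card (Fin n) - (Finset.univ.erase ⟨0, hk⟩).card :=
        card_ne_zero_le_of_eq_zero hs _ fun i hi => by
          simpa [Pi.single_apply, Finset.ne_of_mem_erase hi] using congrFun hx i
    _ = n - k + 1 := by
        have := Fintype.card_le_of_injective s hs
        simp only [Finset.card_erase_of_mem (Finset.mem_univ _), Finset.card_univ,
          Fintype.card_fin] at this ⊢
        omega

theorem dcolT_succ_le (hk : 0 < k) (hG0 : (G 0).rank = k) (j : ℕ) :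
    dcolT G (j + 1) ≤ dcolT G j + (n - k) := by
  obtain ⟨s, hs, hsurj⟩ :=
    exists_injective_surjective_vecMul_comp (hG0.trans (Fintype.card_fin k).symm)
  obtain ⟨u, hu0, hu⟩ := exists_dcolT_eq G hk j
  set w : Fin n → F := fun c => ∑ p : Fin (j + 1), (u p ᵥ* G (j + 1 - p)) c
  obtain ⟨x, hx⟩ := hsurj (-(w ∘ s))
  have hu'0 : (Fin.snoc u x : Fin (j + 2) → Fin k → F) 0 ≠ 0 := by
    rw [← Fin.castSucc_zero, Fin.snoc_castSucc]
    exact hu0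
  calc dcolT G (j + 1)
      ≤ Nat.card {c // truncCodeword G (Fin.snoc u x : Fin (j + 2) → Fin k → F) c ≠ 0} :=
        dcolT_le G hu'0
    _ = dcolT G j + Nat.card {c // w c + (x ᵥ* G 0) c ≠ 0} := by
        rw [card_ne_zero_prod_eq_sum, Fin.sum_univ_castSucc, hu, card_ne_zero_prod_eq_sum]
        simp only [truncCodeword_snoc_castSucc, truncCodeword_snoc_last, w]
    _ ≤ dcolT G j + (n - k) := by
        gcongr
        simpa using card_ne_zero_le_of_eq_zero hs Finset.univ fun i _ => by
          rw [add_eq_zero_iff_eq_neg']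
          exact congrFun hx i

end ColumnDistance

theorem column_distance_singleton_bound_general {F : Type*} [Field F] {n k : ℕ}
    (hk : 0 < k)
    (G : ℕ → Matrix (Fin k) (Fin n) F)
    (hG0 : (G 0).rank = k) :
    (∀ j, dcolT G j ≤ (n - k) * (j + 1) + 1) ∧
    (∀ j, dcolT G j = (n - k) * (j + 1) + 1 →
      ∀ i ≤ j, dcolT G i = (n - k) * (i + 1) + 1) := by
  have h0 := dcolT_zero_le G hk hG0
  have hs := dcolT_succ_le G hk hG0
  have hform : ∀ j, (n - k) * (j + 1) + 1 = n - k + 1 + (n - k) * j := fun j => by ring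
  simp only [hform]
  exact ⟨le_add_mul_of_le_add h0 hs, fun j hj i hij => eq_add_mul_of_le_add h0 hs hj hij⟩

/-- Column distances satisfy the block-code Singleton bound `d_j^c ≤ (n-k)(j+1)+1`; moreover,
if equality holds at time `j`, it holds at every earlier time `i ≤ j`. -/
theorem column_distance_singleton_bound {F : Type*} [Field F] [Fintype F] {n k m : ℕ}
    (hk : 0 < k) (hkn : k ≤ n)
    (G : ℕ → Matrix (Fin k) (Fin n) F)
    (hG0 : (G 0).rank = k)
    (hGm : ∀ i, m < i → G i = 0) :
    (∀ j, dcolT G j ≤ (n - k) * (j + 1) + 1) ∧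
    (∀ j, dcolT G j = (n - k) * (j + 1) + 1 →
      ∀ i ≤ j, dcolT G i = (n - k) * (i + 1) + 1) :=
  column_distance_singleton_bound_general hk G hG0
end

section
/- Let q be a prime power, t ≥ 1, a ∈ F_{q^t}, and f = (f_0, ..., f_d) ∈ F_{q^t}^{d+1}. Then the map D_{f,a} : F_{q^t} → F_{q^t} defined by D_{f,a}(β) = Σ_{i=0}^d f_i N_i(β^{q-1} a) β is F_q-linear: for all λ_1, λ_2 ∈ F_q and β_1, β_2 ∈ F_{q^t}, D_{f,a}(λ_1 β_1 + λ_2 β_2) = λ_1 D_{f,a}(β_1) + λ_2 D_{f,a}(β_2). -/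
/-!
Conjugating by `β` pulls `β` out of every norm: `N_i(β^{q-1} a) β = β^{q^i} N_i(a)`, so
`D_{f,a}(β) = Σ_i f_i N_i(a) β^{q^i}`. As `q` is a power of the characteristic, each
`β ↦ β^{q^i}` is an iterated Frobenius, hence additive, and it fixes every `λ` with `λ^q = λ`.
-/

/-- `N_0(a) = 1`, `N_{i+1}(a) = N_i(a)^q · a` (the skew "norm" sequence, with
`σ(x) = x^q` the Frobenius). -/
def skewN (q : ℕ) {F : Type*} [Field F] : ℕ → F → F
  | 0, _ => 1
  | i + 1, a => (skewN q i a) ^ q * a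

/-- `D_{f,a}(β) = Σ_i f_i N_i(β^{q-1} a) β`, the linearized evaluation of the skew
polynomial with coefficients `f` at the `β`-conjugate of `a`, multiplied by `β`. -/
def Dmap (q : ℕ) {F : Type*} [Field F] {d : ℕ} (f : Fin d → F) (a β : F) : F :=
  ∑ i, f i * skewN q (i : ℕ) (β ^ (q - 1) * a) * β

section

variable {F : Type*} [Field F]

lemma skewN_conj_mul {q : ℕ} (hq : q ≠ 0) (i : ℕ) (a β : F) :
    skewN q i (β ^ (q - 1) * a) * β = β ^ q ^ i * skewN q i a := by
  induction i with
  | zero => simp [skewN]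
  | succ i ih =>
    have hβ : β ^ (q - 1) * β = β ^ q := by
      rw [← pow_succ, Nat.sub_add_cancel (Nat.one_le_iff_ne_zero.mpr hq)]
    calc skewN q (i + 1) (β ^ (q - 1) * a) * β
        = (skewN q i (β ^ (q - 1) * a) * β) ^ q * a := by
          rw [skewN, mul_pow, ← hβ]; ring
      _ = β ^ q ^ (i + 1) * skewN q (i + 1) a := by
          rw [ih, skewN, mul_pow, ← pow_mul, ← pow_succ]; ring

lemma Dmap_eq_sum_pow {q d : ℕ} (hq : q ≠ 0) (f : Fin d → F) (a β : F) :
    Dmap q f a β = ∑ i, f i * skewN q i a * β ^ q ^ (i : ℕ) := by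
  refine Finset.sum_congr rfl fun i _ => ?_
  rw [mul_assoc, skewN_conj_mul hq]
  ring

lemma pow_pow_eq_self {M : Type*} [Monoid M] {q : ℕ} {l : M} (hl : l ^ q = l) (i : ℕ) :
    l ^ q ^ i = l :=
  congrFun (pow_iterate q i) l ▸ Function.IsFixedPt.iterate hl i

theorem Dmap_mul_add_mul_of_expChar {p : ℕ} [ExpChar F p] (k : ℕ) {d : ℕ} (f : Fin d → F)
    (a : F) {l₁ l₂ : F} (h₁ : l₁ ^ p ^ k = l₁) (h₂ : l₂ ^ p ^ k = l₂) (β₁ β₂ : F) :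
    Dmap (p ^ k) f a (l₁ * β₁ + l₂ * β₂) =
      l₁ * Dmap (p ^ k) f a β₁ + l₂ * Dmap (p ^ k) f a β₂ := by
  simp only [Dmap_eq_sum_pow (expChar_pow_pos F p k).ne', Finset.mul_sum,
    ← Finset.sum_add_distrib]
  refine Finset.sum_congr rfl fun i _ => ?_
  rw [← pow_mul, add_pow_expChar_pow, pow_mul, mul_pow, mul_pow,
    pow_pow_eq_self h₁, pow_pow_eq_self h₂]
  ring

end

/-- Membership `λ ∈ F_q` is encoded as `λ ^ q = λ`. -/
theorem Dmap_Fq_linear_general (q t d : ℕ) (hq : IsPrimePow q)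
    (F : Type*) [Field F] [Fintype F] (hF : Fintype.card F = q ^ t)
    (a : F) (f : Fin (d + 1) → F) :
    ∀ l₁ l₂ : F, l₁ ^ q = l₁ → l₂ ^ q = l₂ → ∀ β₁ β₂ : F,
      Dmap q f a (l₁ * β₁ + l₂ * β₂) = l₁ * Dmap q f a β₁ + l₂ * Dmap q f a β₂ := by
  obtain ⟨p, k, hp, -, rfl⟩ := hq
  have : Fact p.Prime := ⟨hp.nat_prime⟩
  have : CharP F p := charP_of_card_eq_prime_pow (f := k * t) (by rw [hF, pow_mul])
  intro l₁ l₂ h₁ h₂ β₁ β₂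
  exact Dmap_mul_add_mul_of_expChar k f a h₁ h₂ β₁ β₂

/-- The map `D_{f,a}` is `F_q`-linear (here `λ ∈ F_q` is characterized by `λ^q = λ`). -/
theorem Dmap_Fq_linear (q t d : ℕ) (hq : IsPrimePow q) (ht : 1 ≤ t)
    (F : Type*) [Field F] [Fintype F] (hF : Fintype.card F = q ^ t)
    (a : F) (f : Fin (d + 1) → F) :
    ∀ l₁ l₂ : F, l₁ ^ q = l₁ → l₂ ^ q = l₂ → ∀ β₁ β₂ : F,
      Dmap q f a (l₁ * β₁ + l₂ * β₂) = l₁ * Dmap q f a β₁ + l₂ * Dmap q f a β₂ :=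
  Dmap_Fq_linear_general q t d hq F hF a f
end

section
/- Let q be a prime power, t ≥ 1, and f = (f_0, ..., f_d) ∈ F_{q^t}^{d+1} nonzero with f_d ≠ 0. Let a_1, ..., a_r ∈ F_{q^t}^* be pairwise non-conjugate (there is no β ∈ F_{q^t}^* with a_j = β^{q-1} a_i for i ≠ j). Then ε + Σ_{i=1}^r dim_{F_q} { β ∈ F_{q^t} : D_{f,a_i}(β) = 0 } ≤ d, where ε = 1 if f_0 = 0 and ε = 0 otherwise. -/
/-!
Pulling `β^(q-1)` out of the norms turns `D_{f,a}(β)` into `∑ f_i N_i(a) β^(q^i)`, the evaluation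
at `a` of `f` viewed in the skew polynomial ring `F[x; x ↦ x^q]`. If `f_0 = 0`, or if some
`D_{f,a_i}` has a nonzero root `β₀`, then `f = g (x - c)` with `c = 0`, resp. `c = β₀^(q-1) a_i`,
and accordingly `D_{f,a} = D_{g,a} ∘ (β ↦ a β^q - c β)`. That additive map has at most `q` roots,
and no nonzero root unless `a` is conjugate to `c`. Hence
`∏ |ker D_{f,a_i}| ≤ q ∏ |ker D_{g,a_i}|`, without the factor `q` when `c = 0`, and induction on
the degree gives `q^ε ∏ |ker D_{f,a_i}| ≤ q^d`.
-/

open Finset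

section Norm

variable {F : Type*} [Field F]

theorem skewN_mul (q i : ℕ) (x y : F) : skewN q i (x * y) = skewN q i x * skewN q i y := by
  induction i with
  | zero => simp [skewN]
  | succ i ih => rw [skewN, skewN, skewN, ih, mul_pow]; ring

theorem skewN_succ' (q i : ℕ) (a : F) : skewN q (i + 1) a = skewN q i a * a ^ q ^ i := by
  induction i with
  | zero => simp [skewN]
  | succ i ih =>
    conv_lhs => rw [skewN, ih]
    rw [skewN, mul_pow, ← pow_mul, ← pow_succ]
    ring

theorem skewN_pow_sub_one_mul_self {q : ℕ} (hq : 0 < q) (i : ℕ) (β : F) :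
    skewN q i (β ^ (q - 1)) * β = β ^ q ^ i := by
  induction i with
  | zero => simp [skewN]
  | succ i ih =>
    rw [skewN, mul_assoc, ← pow_succ, Nat.sub_add_cancel hq, ← mul_pow, ih, ← pow_mul, ← pow_succ]

end Norm

section Linearized

variable {F : Type*} [Field F]

def linearized (q n : ℕ) (f : ℕ → F) (a β : F) : F :=
  ∑ j ∈ range n, f j * skewN q j a * β ^ q ^ j

theorem Dmap_eq_linearized {q d : ℕ} (hq : 0 < q) (f : Fin d → F) (a β : F) :
    Dmap q f a β = linearized q d (fun j => if h : j < d then f ⟨j, h⟩ else 0) a β := by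
  rw [Dmap, linearized, ← Fin.sum_univ_eq_sum_range]
  refine Fintype.sum_congr _ _ fun i => ?_
  rw [dif_pos i.isLt, skewN_mul, mul_comm (skewN q i _), mul_assoc, mul_assoc,
    skewN_pow_sub_one_mul_self hq, ← mul_assoc]

theorem linearized_zero_right {q : ℕ} (hq : 0 < q) (n : ℕ) (f : ℕ → F) (a : F) :
    linearized q n f a 0 = 0 :=
  sum_eq_zero fun j _ => by rw [zero_pow (pow_pos hq j).ne', mul_zero]

/-- The coefficients `g_0, …, g_(k-1)` of the right quotient of `f_0 + ⋯ + f_k x^k` by `x - c`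
in `F[x; x ↦ x^q]`, computed from the top down; the remainder is `f_0 + g_0 c`. -/
def rightQuot (q k : ℕ) (f : ℕ → F) (c : F) (j : ℕ) : F :=
  if j < k then f (j + 1) + rightQuot q k f c (j + 1) * c ^ q ^ (j + 1) else 0
termination_by k - j

theorem rightQuot_of_lt {q k j : ℕ} (f : ℕ → F) (c : F) (h : j < k) :
    rightQuot q k f c j = f (j + 1) + rightQuot q k f c (j + 1) * c ^ q ^ (j + 1) := by
  rw [rightQuot, if_pos h]

theorem rightQuot_of_le {q k j : ℕ} (f : ℕ → F) (c : F) (h : k ≤ j) :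
    rightQuot q k f c j = 0 := by
  rw [rightQuot, if_neg (not_lt.2 h)]

theorem rightQuot_self {q : ℕ} (n : ℕ) (f : ℕ → F) (c : F) :
    rightQuot q (n + 1) f c n = f (n + 1) := by
  rw [rightQuot_of_lt f c n.lt_succ_self, rightQuot_of_le f c le_rfl, zero_mul, add_zero]

theorem linearized_succ_eq {p : ℕ} [ExpChar F p] (m k : ℕ) (f : ℕ → F) (c a β : F) :
    linearized (p ^ m) (k + 1) f a β =
      linearized (p ^ m) k (rightQuot (p ^ m) k f c) a (a * β ^ p ^ m - c * β) +
        (f 0 + rightQuot (p ^ m) k f c 0 * c) * β := by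
  have hfrob : ∀ (x y : F) (j : ℕ), (x - y) ^ (p ^ m) ^ j = x ^ (p ^ m) ^ j - y ^ (p ^ m) ^ j :=
    fun x y j => by rw [← pow_mul]; exact sub_pow_expChar_pow x y _
  set q := p ^ m
  set U : ℕ → F := fun j => rightQuot q k f c j * skewN q j a * c ^ q ^ j * β ^ q ^ j
  have hterm : ∀ j ∈ range k, rightQuot q k f c j * skewN q j a * (a * β ^ q - c * β) ^ q ^ j =
      f (j + 1) * skewN q (j + 1) a * β ^ q ^ (j + 1) + (U (j + 1) - U j) := by
    intro j hj
    simp only [U]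
    rw [hfrob, mul_pow, mul_pow, ← pow_mul β, ← pow_succ', rightQuot_of_lt f c (mem_range.1 hj),
      skewN_succ']
    ring
  rw [linearized, linearized, sum_range_succ', sum_congr rfl hterm, sum_add_distrib, sum_range_sub]
  simp only [U, rightQuot_of_le f c le_rfl, skewN, pow_zero, pow_one]
  ring

theorem rightQuot_remainder_eq_zero {p : ℕ} [ExpChar F p] (m k : ℕ) (f : ℕ → F) {a β : F}
    (hβ : β ≠ 0) (hroot : linearized (p ^ m) (k + 1) f a β = 0) :
    f 0 + rightQuot (p ^ m) k f (β ^ (p ^ m - 1) * a) 0 * (β ^ (p ^ m - 1) * a) = 0 := by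
  have hq0 : 0 < p ^ m := pow_pos (expChar_pos F p) m
  have hfactor : a * β ^ p ^ m - β ^ (p ^ m - 1) * a * β = 0 := by
    rw [mul_right_comm, ← pow_succ, Nat.sub_add_cancel hq0, mul_comm, sub_self]
  rw [linearized_succ_eq m k f (β ^ (p ^ m - 1) * a), hfactor, linearized_zero_right hq0,
    zero_add] at hroot
  exact (mul_eq_zero.1 hroot).resolve_right hβ

end Linearized

theorem AddMonoidHom.card_filter_map_mem_le {G H : Type*} [AddGroup G] [Fintype G] [AddGroup H]
    [DecidableEq H] (φ : G →+ H) (s : Finset H) :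
    #{x | φ x ∈ s} ≤ #s * #{x | φ x = 0} := by
  calc #{x | φ x ∈ s} = ∑ y ∈ s, #{x ∈ {x | φ x ∈ s} | φ x = y} :=
        card_eq_sum_card_fiberwise fun x hx => (mem_filter.1 hx).2
    _ ≤ ∑ _y ∈ s, #{x | φ x = 0} := sum_le_sum fun y _ => by
        refine (card_le_card (filter_subset_filter _ (filter_subset _ _))).trans ?_
        by_cases hy : y ∈ Set.range φ
        · exact (card_fiber_eq_of_mem_range φ hy ⟨0, map_zero φ⟩).le
        · rw [filter_eq_empty_iff.2 fun x _ hx => hy ⟨x, hx⟩, card_empty]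
          exact Nat.zero_le _
    _ = #s * #{x | φ x = 0} := by rw [sum_const, smul_eq_mul]

theorem prod_card_le_one_of_subset_singleton {ι α : Type*} [Fintype ι] {s : ι → Finset α} (x : α)
    (h : ∀ i, s i ⊆ {x}) : ∏ i, #(s i) ≤ 1 :=
  prod_le_one' fun i _ => (card_le_card (h i)).trans (card_singleton x).le

section Counting

variable {F : Type*} [Field F] [Fintype F] [DecidableEq F]

theorem card_mul_pow_sub_mul_eq_zero_le {q : ℕ} (hq : 1 < q) {a : F} (ha : a ≠ 0) (c : F) :
    #{β | a * β ^ q - c * β = 0} ≤ q := by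
  open Polynomial in
  set P : F[X] := C a * X ^ q - C c * X
  have hdeg : P.natDegree = q := by
    rw [natDegree_sub_eq_left_of_natDegree_lt] <;> rw [natDegree_C_mul_X_pow q a ha]
    exact (natDegree_C_mul_le c X).trans_lt (natDegree_X_le.trans_lt hq)
  have hP : P ≠ 0 := ne_zero_of_natDegree_gt (hdeg ▸ hq)
  calc #{β | a * β ^ q - c * β = 0} ≤ P.natDegree :=
        card_le_degree_of_subset_roots fun β hβ =>
          (mem_roots hP).2 (by simpa [P] using (mem_filter.1 hβ).2)
    _ = q := hdeg

theorem card_mul_pow_sub_mul_eq_zero_le_one {q : ℕ} (hq : 0 < q) {a c : F}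
    (hc : ∀ β ≠ 0, c ≠ β ^ (q - 1) * a) :
    #{β | a * β ^ q - c * β = 0} ≤ 1 := by
  refine card_le_one_iff_subset_singleton.2 ⟨0, fun β hβ => mem_singleton.2 ?_⟩
  by_contra hβ0
  refine hc β hβ0 (mul_right_cancel₀ hβ0 ?_)
  rw [mul_right_comm, ← pow_succ, Nat.sub_add_cancel hq, mul_comm (β ^ q)]
  exact (sub_eq_zero.1 (mem_filter.1 hβ).2).symm

theorem prod_card_mul_pow_sub_mul_eq_zero_le {ι : Type*} [Fintype ι] {q : ℕ} (hq : 1 < q)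
    (a : ι → F) (ha : ∀ i, a i ≠ 0)
    (hconj : ∀ i j : ι, i ≠ j → ∀ β : F, β ≠ 0 → a j ≠ β ^ (q - 1) * a i)
    (i₀ : ι) {β₀ : F} (hβ₀ : β₀ ≠ 0) :
    ∏ i, #{β | a i * β ^ q - β₀ ^ (q - 1) * a i₀ * β = 0} ≤ q := by
  classical
  rw [← mul_prod_erase univ _ (mem_univ i₀)]
  refine (Nat.mul_le_mul (card_mul_pow_sub_mul_eq_zero_le hq (ha i₀) _) (prod_le_one' fun i hi =>
    card_mul_pow_sub_mul_eq_zero_le_one (by omega) fun β hβ hβc => ?_)).trans_eq (mul_one q)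
  refine hconj i₀ i (ne_of_mem_erase hi).symm (β₀ / β) (div_ne_zero hβ₀ hβ) ?_
  rw [div_pow, div_mul_eq_mul_div, eq_div_iff (pow_ne_zero _ hβ)]
  linear_combination -hβc

end Counting

section Kernel

variable {F : Type*} [Field F]

/-- The linearization at `a` of the skew polynomial `x - c`, as an additive map. -/
def linearFactor (p m : ℕ) [ExpChar F p] (a c : F) : F →+ F :=
  (AddMonoidHom.mulLeft a).comp (iterateFrobenius F p m).toAddMonoidHom - AddMonoidHom.mulLeft c

theorem linearFactor_apply {p : ℕ} [ExpChar F p] (m : ℕ) (a c β : F) :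
    linearFactor p m a c β = a * β ^ p ^ m - c * β := by
  simp [linearFactor, iterateFrobenius_def]

variable [Fintype F] [DecidableEq F]

def linearizedKer (q n : ℕ) (f : ℕ → F) (a : F) : Finset F :=
  {β | linearized q n f a β = 0}

theorem prod_card_linearizedKer_le {p : ℕ} [ExpChar F p] {ι : Type*} [Fintype ι] (m k : ℕ)
    (f : ℕ → F) (c : F) (a : ι → F) (hr : f 0 + rightQuot (p ^ m) k f c 0 * c = 0) :
    ∏ i, #(linearizedKer (p ^ m) (k + 1) f (a i)) ≤
      (∏ i, #{β | a i * β ^ p ^ m - c * β = 0}) *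
        ∏ i, #(linearizedKer (p ^ m) k (rightQuot (p ^ m) k f c) (a i)) := by
  rw [← prod_mul_distrib]
  refine prod_le_prod' fun i _ => ?_
  have hker : linearizedKer (p ^ m) (k + 1) f (a i) =
      ({β | linearFactor p m (a i) c β ∈ linearizedKer (p ^ m) k (rightQuot (p ^ m) k f c) (a i)} :
        Finset F) := by
    ext β
    simp [linearizedKer, linearized_succ_eq m k f c, hr, linearFactor_apply]
  rw [hker, mul_comm]
  simpa only [linearFactor_apply] using
    (linearFactor p m (a i) c).card_filter_map_mem_le (linearizedKer _ k _ (a i))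

theorem pow_mul_prod_card_linearizedKer_le {p m : ℕ} [ExpChar F p] {ι : Type*} [Fintype ι]
    (hq : 1 < p ^ m) (a : ι → F) (ha : ∀ i, a i ≠ 0)
    (hconj : ∀ i j : ι, i ≠ j → ∀ β : F, β ≠ 0 → a j ≠ β ^ (p ^ m - 1) * a i)
    (n : ℕ) (f : ℕ → F) (hf : f n ≠ 0) :
    (p ^ m) ^ (if f 0 = 0 then 1 else 0) * ∏ i, #(linearizedKer (p ^ m) (n + 1) f (a i)) ≤
      (p ^ m) ^ n := by
  induction n generalizing f with
  | zero =>
    rw [if_neg hf, pow_zero, one_mul]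
    refine prod_card_le_one_of_subset_singleton 0 fun i β hβ => mem_singleton.2 ?_
    simpa [linearizedKer, linearized, skewN, hf] using hβ
  | succ n ih =>
    have hq0 : 0 < p ^ m := by omega
    have hquot_deg : ∀ c, rightQuot (p ^ m) (n + 1) f c n ≠ 0 := fun c => by rwa [rightQuot_self]
    by_cases h0 : f 0 = 0
    · have hstep :=
        prod_card_linearizedKer_le (p := p) m (n + 1) f 0 a (by rw [h0, mul_zero, add_zero])
      have hfactor : ∏ i, #{β | a i * β ^ p ^ m - 0 * β = 0} ≤ 1 :=
        prod_le_one' fun i _ => card_mul_pow_sub_mul_eq_zero_le_one hq0 fun β hβ =>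
          (mul_ne_zero (pow_ne_zero _ hβ) (ha i)).symm
      have hquot := (Nat.le_mul_of_pos_left _ (pow_pos hq0 _)).trans (ih _ (hquot_deg 0))
      rw [if_pos h0, pow_one, pow_succ']
      exact Nat.mul_le_mul_left _
        (hstep.trans ((Nat.mul_le_mul hfactor hquot).trans_eq (one_mul _)))
    rw [if_neg h0, pow_zero, one_mul]
    by_cases hroot : ∃ i, ∃ β ∈ linearizedKer (p ^ m) (n + 2) f (a i), β ≠ 0
    · obtain ⟨i₀, β₀, hβ₀, hβ₀ne⟩ := hroot
      have hr := rightQuot_remainder_eq_zero m (n + 1) f hβ₀ne (mem_filter.1 hβ₀).2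
      have hquot := ih _ (hquot_deg (β₀ ^ (p ^ m - 1) * a i₀))
      rw [if_neg fun hg0 => h0 (by rwa [hg0, zero_mul, add_zero] at hr), pow_zero, one_mul] at hquot
      calc _ ≤ _ := prod_card_linearizedKer_le m (n + 1) f _ a hr
        _ ≤ p ^ m * (p ^ m) ^ n :=
          Nat.mul_le_mul (prod_card_mul_pow_sub_mul_eq_zero_le hq a ha hconj i₀ hβ₀ne) hquot
        _ = (p ^ m) ^ (n + 1) := (pow_succ' _ _).symm
    · push Not at hroot
      exact (prod_card_le_one_of_subset_singleton 0 fun i β hβ =>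
        mem_singleton.2 (hroot i β hβ)).trans (Nat.one_le_pow _ _ hq0)

end Kernel

theorem sum_ker_dim_le_deg_general (q t d r : ℕ) (hq : IsPrimePow q)
    (F : Type*) [Field F] [Fintype F] [DecidableEq F] (hF : Fintype.card F = q ^ t)
    (f : Fin (d + 1) → F) (hfd : f (Fin.last d) ≠ 0)
    (a : Fin r → F) (ha : ∀ i, a i ≠ 0)
    (hconj : ∀ i j : Fin r, i ≠ j → ∀ β : F, β ≠ 0 → a j ≠ β ^ (q - 1) * a i)
    (dims : Fin r → ℕ)
    (hdims : ∀ i, Nat.card {β : F // Dmap q f (a i) β = 0} = q ^ dims i) :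
    (if f 0 = 0 then 1 else 0) + ∑ i, dims i ≤ d := by
  obtain ⟨p, m, hp, hm, rfl⟩ := hq
  rw [← Nat.prime_iff] at hp
  have : Fact p.Prime := ⟨hp⟩
  have : CharP F p := charP_of_card_eq_prime_pow (hF.trans (pow_mul p m t).symm)
  have hq : 1 < p ^ m := Nat.one_lt_pow hm.ne' hp.one_lt
  set f' : ℕ → F := fun j => if h : j < d + 1 then f ⟨j, h⟩ else 0
  have hcard : ∀ i, #(linearizedKer (p ^ m) (d + 1) f' (a i)) = (p ^ m) ^ dims i := fun i => by
    rw [← hdims i, Nat.card_eq_fintype_card, Fintype.card_subtype, linearizedKer]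
    simp_rw [Dmap_eq_linearized (pow_pos hp.pos m), f']
  have key := pow_mul_prod_card_linearizedKer_le hq a ha hconj d f'
    (by simp only [f', dif_pos d.lt_succ_self]; exact hfd)
  rw [prod_congr rfl fun i _ => hcard i, prod_pow_eq_pow_sum, ← pow_add] at key
  simpa [f'] using (Nat.pow_le_pow_iff_right hq).1 key

/-- For a nonzero skew polynomial `f` of degree `d` and pairwise non-conjugate points
`a_1, …, a_r ∈ F*`, the sum of the `F_q`-dimensions of the kernels of the maps `D_{f,a_i}`
(the dimension `dims i` being characterized by `|ker D_{f,a_i}| = q^{dims i}`), plus `1`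
if `f_0 = 0`, is at most `d`. -/
theorem sum_ker_dim_le_deg (q t d r : ℕ) (hq : IsPrimePow q) (ht : 1 ≤ t)
    (F : Type*) [Field F] [Fintype F] [DecidableEq F] (hF : Fintype.card F = q ^ t)
    (f : Fin (d + 1) → F) (hfd : f (Fin.last d) ≠ 0)
    (a : Fin r → F) (ha : ∀ i, a i ≠ 0)
    (hconj : ∀ i j : Fin r, i ≠ j → ∀ β : F, β ≠ 0 → a j ≠ β ^ (q - 1) * a i)
    (dims : Fin r → ℕ)
    (hdims : ∀ i, Nat.card {β : F // Dmap q f (a i) β = 0} = q ^ dims i) :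
    (if f 0 = 0 then 1 else 0) + ∑ i, dims i ≤ d :=
  sum_ker_dim_le_deg_general q t d r hq F hF f hfd a ha hconj dims hdims
end

section
/- Let q be a prime power and t ≥ 1. Let a_1, ..., a_r ∈ F_{q^t}^* be pairwise non-conjugate, and for each i let β_{i,1}, ..., β_{i,l_i} ∈ F_{q^t}^* be such that the elements ω_{i,j} = β_{i,j}^{q-1} a_i are pairwise distinct within each class; optionally let Ω also contain the element 0. Let Ω be the set of all these elements (so they are pairwise distinct), and n = |Ω|. Then the n×n skew Vandermonde matrix V_n(Ω), with entry N_r(ω) in row r (0 ≤ r ≤ n-1) and the column indexed by ω ∈ Ω, is invertible if and only if for each i the set {β_{i,1}, ..., β_{i,l_i}} is linearly independent over F_q. -/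
open Finset

section Operator

variable {F : Type*} [Field F] (p : ℕ) [ExpChar F p] (k : ℕ)

def skewOp (a : F) : F →+ F :=
  AddMonoidHom.mk' (fun v => a * v ^ p ^ k) fun x y => by rw [add_pow_expChar_pow, mul_add]

@[simp]
theorem skewOp_apply (a v : F) : skewOp p k a v = a * v ^ p ^ k := rfl

theorem skewOp_iterate_one (a : F) (n : ℕ) : (skewOp p k a)^[n] 1 = skewN (p ^ k) n a := by
  induction n with
  | zero => rfl
  | succ n ih => rw [Function.iterate_succ_apply', ih, skewOp_apply, skewN, mul_comm]

theorem skewOp_iterate_mul (a α v : F) (n : ℕ) :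
    (skewOp p k a)^[n] (α * v) = α ^ (p ^ k) ^ n * (skewOp p k a)^[n] v := by
  induction n with
  | zero => simp
  | succ n ih =>
    simp only [Function.iterate_succ_apply', ih, skewOp_apply]
    ring

theorem skewOp_iterate_mul_conj (a β v : F) (n : ℕ) :
    (skewOp p k a)^[n] (β * v) = β * (skewOp p k (β ^ (p ^ k - 1) * a))^[n] v := by
  have hconj : Function.Semiconj (β * ·) (skewOp p k (β ^ (p ^ k - 1) * a)) (skewOp p k a) :=
    fun v => by
      have hβ : β ^ p ^ k = β ^ (p ^ k - 1) * β :=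
        (pow_sub_one_mul (expChar_pow_pos F p k).ne' β).symm
      simp only [skewOp_apply, mul_pow, hβ]
      ring
  exact (hconj.iterate_right n v).symm

theorem skewOp_zero_iterate_succ (n : ℕ) (v : F) : (skewOp p k 0)^[n + 1] v = 0 := by
  rw [Function.iterate_succ_apply', skewOp_apply, zero_mul]

theorem skewOp_iterate_mul_of_pow_eq_self (a : F) {x : F} (hx : x ^ p ^ k = x) (n : ℕ) (v : F) :
    (skewOp p k a)^[n] (x * v) = x * (skewOp p k a)^[n] v := by
  have hxn : x ^ (p ^ k) ^ n = x := by
    induction n with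
    | zero => simp
    | succ n ih => rw [pow_succ, pow_mul, ih, hx]
  rw [skewOp_iterate_mul, hxn]

theorem skewOp_iterate_sum {ι : Type*} (a : F) (n : ℕ) (s : Finset ι) (g : ι → F) :
    (skewOp p k a)^[n] (∑ i ∈ s, g i) = ∑ i ∈ s, (skewOp p k a)^[n] (g i) :=
  map_sum (AddMonoidHom.mk' _ (iterate_map_add (skewOp p k a) n)) g s

/-- The map `L_a` of `f = Σ_{ρ < n} c ρ X^ρ`. -/
def linearizedMap (n : ℕ) (c : ℕ → F) (a : F) : F →+ F :=
  AddMonoidHom.mk' (fun v => ∑ ρ ∈ range n, c ρ * (skewOp p k a)^[ρ] v) fun x y => by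
    simp only [iterate_map_add, mul_add, sum_add_distrib]

@[simp]
theorem linearizedMap_apply (n : ℕ) (c : ℕ → F) (a v : F) :
    linearizedMap p k n c a v = ∑ ρ ∈ range n, c ρ * (skewOp p k a)^[ρ] v := rfl

theorem linearizedMap_one (n : ℕ) (c : ℕ → F) (a : F) :
    linearizedMap p k n c a 1 = ∑ ρ ∈ range n, c ρ * skewN (p ^ k) ρ a := by
  simp [skewOp_iterate_one]

theorem linearizedMap_mul_conj (n : ℕ) (c : ℕ → F) (a β v : F) :
    linearizedMap p k n c a (β * v) = β * linearizedMap p k n c (β ^ (p ^ k - 1) * a) v := by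
  simp only [linearizedMap_apply, skewOp_iterate_mul_conj, mul_sum]
  exact sum_congr rfl fun _ _ => mul_left_comm _ _ _

theorem linearizedMap_mul_of_pow_eq_self (n : ℕ) (c : ℕ → F) (a : F) {x : F}
    (hx : x ^ p ^ k = x) (v : F) :
    linearizedMap p k n c a (x * v) = x * linearizedMap p k n c a v := by
  simp only [linearizedMap_apply, skewOp_iterate_mul_of_pow_eq_self p k a hx, mul_sum]
  exact sum_congr rfl fun _ _ => mul_left_comm _ _ _

theorem linearizedMap_zero_left (n : ℕ) (c : ℕ → F) (v : F) :
    linearizedMap p k (n + 1) c 0 v = c 0 * v := by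
  simp [sum_range_succ', skewOp_zero_iterate_succ]

theorem linearizedMap_succ_update (n : ℕ) (c : ℕ → F) (α a v : F) :
    linearizedMap p k (n + 1) (Function.update c n α) a v
      = linearizedMap p k n c a v + α * (skewOp p k a)^[n] v := by
  simp only [linearizedMap_apply, sum_range_succ, Function.update_self]
  congr 1
  exact sum_congr rfl fun ρ hρ => by rw [Function.update_of_ne (mem_range.1 hρ).ne]

/-- Right division of `f` by `X - ω`: quotient `b`, remainder `f(ω)`. -/
theorem exists_linearizedMap_eq_comp_sub (ω : F) (n : ℕ) (c : ℕ → F) :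
    ∃ b : ℕ → F, b n = c (n + 1) ∧ ∀ a v, linearizedMap p k (n + 2) c a v =
      linearizedMap p k (n + 1) b a ((skewOp p k a - AddMonoidHom.mulLeft ω) v)
        + linearizedMap p k (n + 2) c ω 1 * v := by
  induction n generalizing c with
  | zero =>
    refine ⟨fun _ => c 1, rfl, fun a v => ?_⟩
    simp only [linearizedMap_apply, sum_range_succ, range_zero, sum_empty, Function.iterate_zero,
      id_eq, Function.iterate_one, skewOp_apply, AddMonoidHom.sub_apply, AddMonoidHom.coe_mulLeft,
      one_pow]
    ring
  | succ n ih =>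
    set φ : F → F →+ F := fun a => skewOp p k a - AddMonoidHom.mulLeft ω
    -- `c (n+2) x^(n+2) = c (n+2) x^(n+1) (x - ω) + c (n+2) ω^(q^(n+1)) x^(n+1)` lowers the degree
    set c' := Function.update c (n + 1) (c (n + 1) + c (n + 2) * ω ^ (p ^ k) ^ (n + 1))
    have hlead : ∀ a v, linearizedMap p k (n + 1 + 2) c a v = linearizedMap p k (n + 2) c' a v
        + c (n + 2) * (skewOp p k a)^[n + 1] (φ a v) := by
      intro a v
      have hsplit : (skewOp p k a)^[n + 2] v
          = (skewOp p k a)^[n + 1] (φ a v) + ω ^ (p ^ k) ^ (n + 1) * (skewOp p k a)^[n + 1] v := by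
        rw [Function.iterate_succ_apply, ← skewOp_iterate_mul, ← iterate_map_add]
        simp [φ]
      rw [linearizedMap_succ_update]
      simp only [linearizedMap_apply, sum_range_succ _ (n + 2), sum_range_succ _ (n + 1), hsplit]
      ring
    obtain ⟨b', -, hb'⟩ := ih c'
    have hrem : linearizedMap p k (n + 2) c' ω 1 = linearizedMap p k (n + 1 + 2) c ω 1 := by
      rw [hlead]
      simp [φ]
    refine ⟨Function.update b' (n + 1) (c (n + 2)), Function.update_self .., fun a v => ?_⟩
    rw [hlead, hb', hrem, linearizedMap_succ_update]
    ring

theorem sum_mul_skewN_conj_eq_zero {l : ℕ} (x β : Fin l → F) (hx : ∀ j, x j ^ p ^ k = x j)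
    (hsum : ∑ j, x j * β j = 0) (a : F) (n : ℕ) :
    ∑ j, x j * β j * skewN (p ^ k) n (β j ^ (p ^ k - 1) * a) = 0 := by
  have hcol : ∀ j, x j * β j * skewN (p ^ k) n (β j ^ (p ^ k - 1) * a)
      = (skewOp p k a)^[n] (x j * β j) := fun j => by
    rw [skewOp_iterate_mul_of_pow_eq_self p k a (hx j), ← mul_one (β j),
      skewOp_iterate_mul_conj, skewOp_iterate_one, mul_one, mul_assoc]
  simp only [hcol]
  rw [← skewOp_iterate_sum, hsum, iterate_map_zero]

end Operator

section Conjugacy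

variable {F : Type*} [Field F] {q : ℕ}

def IsSkewConj (q : ℕ) (a b : F) : Prop := ∃ β : F, β ≠ 0 ∧ b = β ^ (q - 1) * a

instance [Fintype F] [DecidableEq F] (a b : F) : Decidable (IsSkewConj q a b) := by
  unfold IsSkewConj
  infer_instance

theorem IsSkewConj.symm {a b : F} (h : IsSkewConj q a b) : IsSkewConj q b a := by
  obtain ⟨β, hβ, rfl⟩ := h
  exact ⟨β⁻¹, inv_ne_zero hβ, by rw [← mul_assoc, ← mul_pow, inv_mul_cancel₀ hβ, one_pow, one_mul]⟩

theorem IsSkewConj.trans {a b c : F} (hab : IsSkewConj q a b) (hbc : IsSkewConj q b c) :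
    IsSkewConj q a c := by
  obtain ⟨β, hβ, rfl⟩ := hab
  obtain ⟨γ, hγ, rfl⟩ := hbc
  exact ⟨γ * β, mul_ne_zero hγ hβ, by rw [mul_pow, mul_assoc]⟩

theorem IsSkewConj.ne_zero {a b : F} (ha : a ≠ 0) (h : IsSkewConj q a b) : b ≠ 0 := by
  obtain ⟨β, hβ, rfl⟩ := h
  exact mul_ne_zero (pow_ne_zero _ hβ) ha

end Conjugacy

theorem AddMonoidHom.card_filter_mem_le {G H : Type*} [AddGroup G] [Fintype G] [AddGroup H]
    [DecidableEq H] (φ : G →+ H) (s : Finset H) :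
    #{x | φ x ∈ s} ≤ #{x | φ x = 0} * #s := by
  refine card_le_mul_card_image_of_maps_to (fun x hx => (mem_filter.1 hx).2) _ fun y _ => ?_
  by_cases hy : y ∈ Set.range φ
  · rw [← card_fiber_eq_of_mem_range φ hy ⟨0, map_zero φ⟩]
    exact card_le_card fun x => by simp +contextual
  · rw [card_eq_zero.2 (filter_eq_empty_iff.2 fun x _ hx => hy ⟨x, hx⟩)]
    exact Nat.zero_le _

section Kernels

variable {F : Type*} [Field F] [Fintype F] [DecidableEq F] (p : ℕ) [ExpChar F p] (k : ℕ)

theorem two_le_card_pow_eq_self : 2 ≤ #{x : F | x ^ p ^ k = x} := by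
  have hq : p ^ k ≠ 0 := (expChar_pow_pos F p k).ne'
  calc 2 = #{(0 : F), 1} := (card_pair zero_ne_one).symm
    _ ≤ _ := card_le_card fun x hx => by
      rcases mem_insert.1 hx with rfl | hx
      · simp [zero_pow hq]
      · simp [mem_singleton.1 hx]

theorem card_ker_skewOp_sub_le_one {a ω : F} (h : ¬IsSkewConj (p ^ k) a ω) :
    #{v | (skewOp p k a - AddMonoidHom.mulLeft ω) v = 0} ≤ 1 := by
  have hq : p ^ k ≠ 0 := (expChar_pow_pos F p k).ne'
  have hzero : ∀ v, a * v ^ p ^ k - ω * v = 0 → v = 0 := fun v hv => by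
    by_contra hv0
    refine h ⟨v, hv0, mul_right_cancel₀ hv0 ?_⟩
    linear_combination -hv - a * pow_sub_one_mul hq v
  refine card_le_one.2 fun u hu v hv => ?_
  rw [mem_filter_univ] at hu hv
  simp only [AddMonoidHom.sub_apply, skewOp_apply, AddMonoidHom.coe_mulLeft] at hu hv
  rw [hzero u hu, hzero v hv]

theorem card_ker_skewOp_sub_le {a ω : F} (ha : a ≠ 0) (h : IsSkewConj (p ^ k) a ω) :
    #{v | (skewOp p k a - AddMonoidHom.mulLeft ω) v = 0} ≤ #{x : F | x ^ p ^ k = x} := by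
  have hq : p ^ k ≠ 0 := (expChar_pow_pos F p k).ne'
  obtain ⟨s, hs, rfl⟩ := h
  refine card_le_card_of_injOn (· / s) (fun v hv => ?_) fun u _ v _ huv => (div_left_inj' hs).1 huv
  rw [mem_coe, mem_filter_univ] at hv ⊢
  simp only [AddMonoidHom.sub_apply, skewOp_apply, AddMonoidHom.coe_mulLeft] at hv
  have hv' : v ^ p ^ k = s ^ (p ^ k - 1) * v := mul_left_cancel₀ ha (by linear_combination hv)
  rw [div_pow, div_eq_div_iff (pow_ne_zero _ hs) hs, hv', ← pow_sub_one_mul hq s]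
  ring

theorem prod_card_ker_skewOp_sub_le {ι : Type*} [Fintype ι] {a : ι → F} (ha : ∀ i, a i ≠ 0)
    (ω : F) : ∏ i, #{v | (skewOp p k (a i) - AddMonoidHom.mulLeft ω) v = 0}
      ≤ #{x : F | x ^ p ^ k = x} ^ #{i | IsSkewConj (p ^ k) (a i) ω} := by
  calc _ ≤ ∏ i, if IsSkewConj (p ^ k) (a i) ω then #{x : F | x ^ p ^ k = x} else 1 :=
        prod_le_prod' fun i _ => by
          split_ifs with h
          exacts [card_ker_skewOp_sub_le p k (ha i) h, card_ker_skewOp_sub_le_one p k h]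
    _ = _ := by rw [prod_ite, prod_const, prod_const_one, mul_one]

theorem prod_card_ker_linearizedMap_mul_le_one {ι : Type*} [Fintype ι] (a : ι → F) (n : ℕ)
    (c : ℕ → F)
    (hroot : ∀ ω, linearizedMap p k (n + 1) c ω 1 = 0 → ω ≠ 0 ∧ ∀ i, ¬IsSkewConj (p ^ k) (a i) ω) :
    (∏ i, #{v | linearizedMap p k (n + 1) c (a i) v = 0})
      * (if c 0 = 0 then #{x : F | x ^ p ^ k = x} else 1) ≤ 1 := by
  have hc0 : c 0 ≠ 0 := fun h => (hroot 0 (by rw [linearizedMap_zero_left, h, zero_mul])).1 rfl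
  rw [if_neg hc0, mul_one]
  refine prod_le_one' fun i _ => card_le_one.2 fun u hu v hv => ?_
  have hzero : ∀ v, linearizedMap p k (n + 1) c (a i) v = 0 → v = 0 := fun v hv => by
    by_contra hv0
    refine (hroot (v ^ (p ^ k - 1) * a i) ?_).2 i ⟨v, hv0, rfl⟩
    rw [← mul_one v, linearizedMap_mul_conj] at hv
    exact (mul_eq_zero.1 hv).resolve_left hv0
  rw [mem_filter_univ] at hu hv
  rw [hzero u hu, hzero v hv]

theorem prod_card_ker_linearizedMap_mul_le_of_eq_comp {ι : Type*} [Fintype ι] {a : ι → F}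
    (ha : ∀ i, a i ≠ 0) (hconj : Pairwise fun i j => ¬IsSkewConj (p ^ k) (a i) (a j))
    {n : ℕ} {b c : ℕ → F} {ω : F} (hω : ω = 0 ∨ ∃ i, IsSkewConj (p ^ k) (a i) ω)
    (hdiv : ∀ a v, linearizedMap p k (n + 2) c a v
      = linearizedMap p k (n + 1) b a ((skewOp p k a - AddMonoidHom.mulLeft ω) v)) :
    (∏ i, #{v | linearizedMap p k (n + 2) c (a i) v = 0})
        * (if c 0 = 0 then #{x : F | x ^ p ^ k = x} else 1)
      ≤ #{x : F | x ^ p ^ k = x} * ((∏ i, #{v | linearizedMap p k (n + 1) b (a i) v = 0})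
        * (if b 0 = 0 then #{x : F | x ^ p ^ k = x} else 1)) := by
  set Φ := #{x : F | x ^ p ^ k = x}
  have hΦ : 1 ≤ Φ := (two_le_card_pow_eq_self p k).trans' one_le_two
  have hker : ∏ i, #{v | linearizedMap p k (n + 2) c (a i) v = 0}
      ≤ (∏ i, #{v | (skewOp p k (a i) - AddMonoidHom.mulLeft ω) v = 0})
        * ∏ i, #{v | linearizedMap p k (n + 1) b (a i) v = 0} := by
    rw [← prod_mul_distrib]
    refine prod_le_prod' fun i _ => ?_
    simpa only [mem_filter_univ, ← hdiv] using (skewOp p k (a i) -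
      AddMonoidHom.mulLeft ω).card_filter_mem_le {v | linearizedMap p k (n + 1) b (a i) v = 0}
  have hc0 : c 0 = -(b 0 * ω) := by
    have h := hdiv 0 1
    rw [linearizedMap_zero_left, linearizedMap_zero_left] at h
    simpa using h
  have hφ := prod_card_ker_skewOp_sub_le p k ha ω
  rcases hω with rfl | ⟨i₀, hi₀⟩
  · have hnone : #{i | IsSkewConj (p ^ k) (a i) 0} = 0 :=
      card_eq_zero.2 (filter_eq_empty_iff.2 fun i _ h => h.ne_zero (ha i) rfl)
    rw [hnone, pow_zero] at hφ
    rw [hc0, mul_zero, neg_zero, if_pos rfl, mul_comm Φ]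
    refine Nat.mul_le_mul_right _ (hker.trans ?_)
    calc _ ≤ 1 * ∏ i, #{v | linearizedMap p k (n + 1) b (a i) v = 0} := Nat.mul_le_mul_right _ hφ
      _ ≤ _ := by rw [one_mul]; exact Nat.le_mul_of_pos_right _ (by split_ifs <;> omega)
  · have hω0 : ω ≠ 0 := hi₀.ne_zero (ha i₀)
    have hone : #{i | IsSkewConj (p ^ k) (a i) ω} ≤ 1 := card_le_one.2 fun i hi j hj => by
      rw [mem_filter_univ] at hi hj
      by_contra hij
      exact hconj hij (hi.trans hj.symm)
    have hb0 : c 0 = 0 ↔ b 0 = 0 := by simp [hc0, hω0]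
    simp only [hb0, ← mul_assoc]
    refine Nat.mul_le_mul_right _ (hker.trans (Nat.mul_le_mul_right _ ?_))
    exact (hφ.trans (Nat.pow_le_pow_right hΦ hone)).trans_eq (pow_one Φ)

theorem prod_card_ker_linearizedMap_mul_le {ι : Type*} [Fintype ι] {a : ι → F}
    (ha : ∀ i, a i ≠ 0) (hconj : Pairwise fun i j => ¬IsSkewConj (p ^ k) (a i) (a j))
    (d : ℕ) (c : ℕ → F) (hc : ∃ ρ ≤ d, c ρ ≠ 0) :
    (∏ i, #{v | linearizedMap p k (d + 1) c (a i) v = 0})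
        * (if c 0 = 0 then #{x : F | x ^ p ^ k = x} else 1)
      ≤ #{x : F | x ^ p ^ k = x} ^ d := by
  have hΦ : 1 ≤ #{x : F | x ^ p ^ k = x} := (two_le_card_pow_eq_self p k).trans' one_le_two
  induction d generalizing c with
  | zero =>
    obtain ⟨ρ, hρ, hcρ⟩ := hc
    rw [Nat.le_zero.1 hρ] at hcρ
    refine (prod_card_ker_linearizedMap_mul_le_one p k a 0 c fun ω hω => ?_).trans_eq
      (pow_zero _).symm
    simp [hcρ] at hω
  | succ e ih =>
    by_cases hlead : c (e + 1) = 0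
    · have hL : ∀ a, linearizedMap p k (e + 1 + 1) c a = linearizedMap p k (e + 1) c a :=
        fun a => by ext v; simp [sum_range_succ _ (e + 1), hlead]
      obtain ⟨ρ, hρ, hcρ⟩ := hc
      have hρe : ρ ≤ e := Nat.lt_succ_iff.1 (lt_of_le_of_ne hρ (by rintro rfl; exact hcρ hlead))
      simp only [hL]
      exact (ih c ⟨ρ, hρe, hcρ⟩).trans (Nat.pow_le_pow_right hΦ e.le_succ)
    by_cases hroot : ∃ ω, linearizedMap p k (e + 2) c ω 1 = 0 ∧
        (ω = 0 ∨ ∃ i, IsSkewConj (p ^ k) (a i) ω)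
    · obtain ⟨ω, hfω, hω⟩ := hroot
      obtain ⟨b, hb, hdiv⟩ := exists_linearizedMap_eq_comp_sub p k ω e c
      simp only [hfω, zero_mul, add_zero] at hdiv
      calc _ ≤ _ := prod_card_ker_linearizedMap_mul_le_of_eq_comp p k ha hconj hω hdiv
        _ ≤ _ := Nat.mul_le_mul_left _ (ih b ⟨e, le_rfl, hb ▸ hlead⟩)
        _ = _ := (pow_succ' _ _).symm
    · push Not at hroot
      exact (prod_card_ker_linearizedMap_mul_le_one p k a (e + 1) c hroot).trans
        (Nat.one_le_pow _ _ hΦ)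

theorem pow_card_le_card_ker_linearizedMap {l : ℕ} {β : Fin l → F}
    (hβ : ∀ x : Fin l → F, (∀ j, x j ^ p ^ k = x j) → ∑ j, x j * β j = 0 → ∀ j, x j = 0)
    {n : ℕ} {c : ℕ → F} {a : F} (hroot : ∀ j, linearizedMap p k n c a (β j) = 0) :
    #{x : F | x ^ p ^ k = x} ^ l ≤ #{v | linearizedMap p k n c a v = 0} := by
  rw [← Fintype.card_piFinset_const]
  refine card_le_card_of_injOn (fun x => ∑ j, x j * β j) (fun x hx => ?_) fun x hx y hy hxy => ?_
  · have hx' : ∀ j, x j ^ p ^ k = x j := fun j => by simpa using Fintype.mem_piFinset.1 hx j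
    rw [mem_coe, mem_filter_univ, map_sum]
    simp [linearizedMap_mul_of_pow_eq_self p k _ _ _ (hx' _), hroot]
  · have hx' : ∀ j, x j ^ p ^ k = x j := fun j => by simpa using Fintype.mem_piFinset.1 hx j
    have hy' : ∀ j, y j ^ p ^ k = y j := fun j => by simpa using Fintype.mem_piFinset.1 hy j
    funext j
    refine sub_eq_zero.1 (hβ (x - y) (fun j => ?_) ?_ j)
    · simp [sub_pow_expChar_pow, hx', hy']
    · simpa [sub_mul, sum_sub_distrib, sub_eq_zero] using hxy

end Kernels

section SkewVandermonde

variable {F : Type*} [Field F]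

def skewVandermonde {ι : Type*} {n : ℕ} (q : ℕ) (e : ι ≃ Fin n) (ω : ι → F) : Matrix ι ι F :=
  Matrix.of fun r x => skewN q (e r) (ω x)

theorem exists_sum_skewN_eq_zero_of_det_eq_zero {ι : Type*} [Fintype ι] [DecidableEq ι] {n : ℕ}
    (q : ℕ) (e : ι ≃ Fin n) (ω : ι → F) (h : (skewVandermonde q e ω).det = 0) :
    ∃ c : ℕ → F, (∃ ρ < n, c ρ ≠ 0) ∧ ∀ x, ∑ ρ ∈ range n, c ρ * skewN q ρ (ω x) = 0 := by
  obtain ⟨v, hv0, hv⟩ := Matrix.exists_vecMul_eq_zero_iff.2 h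
  obtain ⟨r₀, hr₀⟩ := Function.ne_iff.1 hv0
  let c : ℕ → F := fun ρ => if h : ρ < n then v (e.symm ⟨ρ, h⟩) else 0
  have hc : ∀ r, c (e r) = v r := fun r => by simp [c]
  refine ⟨c, ⟨e r₀, (e r₀).isLt, by rwa [hc]⟩, fun x => ?_⟩
  rw [← Fin.sum_univ_eq_sum_range (fun ρ => c ρ * skewN q ρ (ω x)), ← e.sum_comp]
  simpa [hc, skewVandermonde, Matrix.vecMul, dotProduct] using congrFun hv x

variable (p : ℕ) [ExpChar F p] (k : ℕ)

theorem independent_of_det_skewVandermonde_ne_zero {ι : Type*} [Fintype ι] [DecidableEq ι] {n : ℕ}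
    (e : ι ≃ Fin n) (ω : ι → F) (hdet : (skewVandermonde (p ^ k) e ω).det ≠ 0) {l : ℕ}
    {β : Fin l → F} (hβ : ∀ j, β j ≠ 0) (a : F) {f : Fin l → ι} (hf : Function.Injective f)
    (hωf : ∀ j, ω (f j) = β j ^ (p ^ k - 1) * a) :
    ∀ x : Fin l → F, (∀ j, x j ^ p ^ k = x j) → ∑ j, x j * β j = 0 → ∀ j, x j = 0 := by
  intro x hx hsum j
  have hcols : LinearIndependent F fun j r => skewN (p ^ k) (e r) (ω (f j)) :=
    (Matrix.linearIndependent_cols_iff_isUnit.2 ((Matrix.isUnit_iff_isUnit_det _).2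
      (isUnit_iff_ne_zero.2 hdet))).comp f hf
  have hrel := Fintype.linearIndependent_iff.1 hcols (fun j => x j * β j)
  refine (mul_eq_zero.1 (hrel ?_ j)).resolve_right (hβ j)
  ext r
  simpa [hωf] using sum_mul_skewN_conj_eq_zero p k x β hx hsum a (e r)

theorem det_skewVandermonde_ne_zero [Fintype F] [DecidableEq F] {r : ℕ} {a : Fin r → F}
    (ha : ∀ i, a i ≠ 0) (hconj : Pairwise fun i j => ¬IsSkewConj (p ^ k) (a i) (a j))
    {l : Fin r → ℕ} {B : ∀ i, Fin (l i) → F}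
    (hB : ∀ i, ∀ x : Fin (l i) → F, (∀ j, x j ^ p ^ k = x j) → ∑ j, x j * B i j = 0 → ∀ j, x j = 0)
    {Z : Type*} [Fintype Z] [DecidableEq Z] [Subsingleton Z] {n : ℕ}
    (e : ((Σ i, Fin (l i)) ⊕ Z) ≃ Fin n) :
    (skewVandermonde (p ^ k) e
      (Sum.elim (fun s => B s.1 s.2 ^ (p ^ k - 1) * a s.1) fun _ => 0)).det ≠ 0 := by
  intro hdet
  set Φ := #{x : F | x ^ p ^ k = x}
  obtain ⟨c, ⟨ρ, hρ, hcρ⟩, hroot⟩ := exists_sum_skewN_eq_zero_of_det_eq_zero _ e _ hdet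
  simp only [← linearizedMap_one p k] at hroot
  have hn : n = ∑ i, l i + Fintype.card Z := by
    rw [← Fintype.card_fin n, ← Fintype.card_congr e]
    simp [Fintype.card_sum, Fintype.card_sigma]
  obtain ⟨d, rfl⟩ := Nat.exists_eq_add_one_of_ne_zero (Nat.ne_zero_of_lt hρ)
  have hker : ∀ i, Φ ^ l i ≤ #{v | linearizedMap p k (d + 1) c (a i) v = 0} := fun i =>
    pow_card_le_card_ker_linearizedMap p k (hB i) fun j => by
      have hij := hroot (.inl ⟨i, j⟩)
      rw [Sum.elim_inl] at hij
      rw [← mul_one (B i j), linearizedMap_mul_conj, hij, mul_zero]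
  have hZ : Φ ^ Fintype.card Z ≤ if c 0 = 0 then Φ else 1 := by
    rcases isEmpty_or_nonempty Z with hZ | ⟨⟨z⟩⟩
    · rw [Fintype.card_eq_zero, pow_zero]
      split_ifs <;> linarith [two_le_card_pow_eq_self (F := F) p k]
    · have hc0 := hroot (.inr z)
      rw [Sum.elim_inr, linearizedMap_zero_left, mul_one] at hc0
      have : Unique Z := uniqueOfSubsingleton z
      rw [Fintype.card_unique, pow_one, if_pos hc0]
  have hle : Φ ^ (d + 1) ≤ Φ ^ d := calc
    Φ ^ (d + 1) = (∏ i, Φ ^ l i) * Φ ^ Fintype.card Z := by rw [hn, pow_add, prod_pow_eq_pow_sum]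
    _ ≤ _ := Nat.mul_le_mul (prod_le_prod' fun i _ => hker i) hZ
    _ ≤ Φ ^ d := prod_card_ker_linearizedMap_mul_le p k ha hconj d c ⟨ρ, Nat.lt_succ_iff.1 hρ, hcρ⟩
  exact hle.not_gt (Nat.pow_lt_pow_right (two_le_card_pow_eq_self p k) d.lt_succ_self)

end SkewVandermonde

theorem exists_prime_charP_eq_pow {F : Type*} [Field F] [Fintype F] {q t : ℕ}
    (hF : Fintype.card F = q ^ t) (ht : 1 ≤ t) : ∃ p k, p.Prime ∧ CharP F p ∧ q = p ^ k := by
  obtain ⟨n, hp, hn⟩ := FiniteField.card F (ringChar F)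
  obtain ⟨k, -, hk⟩ := (Nat.dvd_prime_pow hp).1 (hn ▸ hF ▸ dvd_pow_self q (by omega))
  exact ⟨ringChar F, k, hp, ringChar.charP F, hk⟩

theorem skew_vandermonde_invertible_iff_general (q t r : ℕ) (ht : 1 ≤ t)
    (F : Type*) [Field F] [Fintype F] (hF : Fintype.card F = q ^ t)
    (a : Fin r → F) (ha : ∀ i, a i ≠ 0)
    (hconj : ∀ i j : Fin r, i ≠ j → ∀ β : F, β ≠ 0 → a j ≠ β ^ (q - 1) * a i)
    (l : Fin r → ℕ) (B : ∀ i : Fin r, Fin (l i) → F) (hB : ∀ i j, B i j ≠ 0)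
    (z : Bool)
    (e : ((Σ i : Fin r, Fin (l i)) ⊕ Fin (if z then 1 else 0)) ≃
         Fin (Fintype.card ((Σ i : Fin r, Fin (l i)) ⊕ Fin (if z then 1 else 0)))) :
    (Matrix.det (Matrix.of fun p c : (Σ i : Fin r, Fin (l i)) ⊕ Fin (if z then 1 else 0) =>
        skewN q ((e p : Fin _) : ℕ)
          (Sum.elim (fun s : Σ i : Fin r, Fin (l i) => (B s.1 s.2) ^ (q - 1) * a s.1)
            (fun _ => (0 : F)) c)) ≠ 0) ↔
      ∀ i : Fin r, ∀ c : Fin (l i) → F, (∀ j, (c j) ^ q = c j) →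
        ∑ j, c j * B i j = 0 → ∀ j, c j = 0 := by
  classical
  obtain ⟨p, k, hp, _, rfl⟩ := exists_prime_charP_eq_pow hF ht
  have := ExpChar.prime (R := F) hp
  have : Subsingleton (Fin (if z then 1 else 0)) :=
    Fin.subsingleton_iff_le_one.2 (by split <;> omega)
  have hconj' : Pairwise fun i j => ¬IsSkewConj (p ^ k) (a i) (a j) :=
    fun i j hij ⟨β, hβ, h⟩ => hconj i j hij β hβ h
  exact ⟨fun hdet i => independent_of_det_skewVandermonde_ne_zero p k e _ hdet (hB i) (a i)
      (f := fun j => .inl ⟨i, j⟩) (fun j j' h => by simpa using h) fun j => rfl,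
    fun hind => det_skewVandermonde_ne_zero p k ha hconj' hind e⟩

/-- The skew Vandermonde criterion: with `Ω` consisting of the pairwise distinct conjugates
`ω_{i,j} = β_{i,j}^{q-1} a_i` of pairwise non-conjugate `a_1, …, a_r ∈ F*`, together
(optionally, when `z = true`) with the element `0`, the square skew Vandermonde matrix
`V_n(Ω)` (row `r` has entries `N_r(ω)`, `ω ∈ Ω`, rows ordered by any bijection `e`) is
invertible iff for each `i` the set `{β_{i,1}, …, β_{i,l_i}}` is `F_q`-linearly
independent (membership of a scalar `c` in `F_q` being characterized by `c^q = c`). -/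
theorem skew_vandermonde_invertible_iff (q t r : ℕ) (hq : IsPrimePow q) (ht : 1 ≤ t)
    (F : Type*) [Field F] [Fintype F] (hF : Fintype.card F = q ^ t)
    (a : Fin r → F) (ha : ∀ i, a i ≠ 0)
    (hconj : ∀ i j : Fin r, i ≠ j → ∀ β : F, β ≠ 0 → a j ≠ β ^ (q - 1) * a i)
    (l : Fin r → ℕ) (B : ∀ i : Fin r, Fin (l i) → F) (hB : ∀ i j, B i j ≠ 0)
    (hdist : ∀ i : Fin r, Function.Injective fun j : Fin (l i) => (B i j) ^ (q - 1) * a i)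
    (z : Bool)
    (e : ((Σ i : Fin r, Fin (l i)) ⊕ Fin (if z then 1 else 0)) ≃
         Fin (Fintype.card ((Σ i : Fin r, Fin (l i)) ⊕ Fin (if z then 1 else 0)))) :
    (Matrix.det (Matrix.of fun p c : (Σ i : Fin r, Fin (l i)) ⊕ Fin (if z then 1 else 0) =>
        skewN q ((e p : Fin _) : ℕ)
          (Sum.elim (fun s : Σ i : Fin r, Fin (l i) => (B s.1 s.2) ^ (q - 1) * a s.1)
            (fun _ => (0 : F)) c)) ≠ 0) ↔
      ∀ i : Fin r, ∀ c : Fin (l i) → F, (∀ j, (c j) ^ q = c j) →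
        ∑ j, c j * B i j = 0 → ∀ j, c j = 0 :=
  skew_vandermonde_invertible_iff_general q t r ht F hF a ha hconj l B hB z e
end

section
/- In the setting of Construction 1 (with k ≤ n), every k×k submatrix of G_0 is invertible, and every k×k submatrix of G_1 is invertible. -/
/-!
The telescoping identity `N_r(a^(q-1)) · a = a^(q^r)` turns every `k × k` submatrix of `G_0`
into the Moore matrix `(α_i^(q^r))` of the `α_i` in the chosen columns, and every one of `G_1`
into the Moore matrix of the `β_i` with its rows scaled by `N_r(γ) ≠ 0`.

A Moore matrix of `𝔽_q`-linearly independent `v_1, …, v_k` is invertible: a nonzero `c` in its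
left kernel gives the `q`-linearized polynomial `∑ c_r X^(q^r)`, nonzero of degree `< q^k`, which
is `𝔽_q`-linear and so vanishes at all `q^k` distinct `𝔽_q`-combinations of the `v_i`.

The `α_i` (and the `β_i`) are `𝔽_q`-independent because their coordinates in the basis `b` start
with the rows `(1, λ_i, …, λ_i^(k-1))` of a Vandermonde matrix in the distinct `λ_i ∈ 𝔽_q`.
-/

open Polynomial Matrix

/-- `α = Σ_{j=0}^{k-1} λ^j b_j` (coordinates `(1, λ, …, λ^{k-1}, 0, …, 0)` in the basis `b`). -/
def alph (k : ℕ) {F : Type*} [Field F] (lam : F) (b : Fin (2 * k) → F) : F :=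
  ∑ j : Fin k, lam ^ (j : ℕ) * b (Fin.castLE (by omega) j)

/-- `β = Σ_{j=0}^{2k-1} λ^j b_j` (coordinates `(1, λ, …, λ^{2k-1})` in the basis `b`). -/
def bet (k : ℕ) {F : Type*} [Field F] (lam : F) (b : Fin (2 * k) → F) : F :=
  ∑ j : Fin (2 * k), lam ^ (j : ℕ) * b j

/-- `(G_0)_{r,i} = N_r(α_i^{q-1}) α_i = N_r(^{α_i} 1) α_i`. -/
def G0mat (q k n : ℕ) {F : Type*} [Field F] (lam : Fin n → F) (b : Fin (2 * k) → F) :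
    Matrix (Fin k) (Fin n) F :=
  Matrix.of fun r i => skewN q (r : ℕ) ((alph k (lam i) b) ^ (q - 1)) * alph k (lam i) b

/-- `(G_1)_{r,i} = N_r(β_i^{q-1} γ) β_i = N_r(^{β_i} γ) β_i`. -/
def G1mat (q k n : ℕ) {F : Type*} [Field F] (γ : F) (lam : Fin n → F)
    (b : Fin (2 * k) → F) : Matrix (Fin k) (Fin n) F :=
  Matrix.of fun r i => skewN q (r : ℕ) ((bet k (lam i) b) ^ (q - 1) * γ) * bet k (lam i) b

/-- The generator matrix `G(D) = G_0 + G_1 D` of Construction 1. -/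
noncomputable def GpolyMat (q k n : ℕ) {F : Type*} [Field F] (γ : F) (lam : Fin n → F)
    (b : Fin (2 * k) → F) : Matrix (Fin k) (Fin n) (Polynomial F) :=
  Matrix.of fun r i =>
    Polynomial.C (G0mat q k n lam b r i) + Polynomial.C (G1mat q k n γ lam b r i) * Polynomial.X

open Function

section SkewNorm

variable {F : Type*} [Field F] {q : ℕ}

theorem skewN_mul_s12 (r : ℕ) (a c : F) : skewN q r (a * c) = skewN q r a * skewN q r c := by
  induction r with
  | zero => simp [skewN]
  | succ r ih => simp only [skewN, ih, mul_pow]; ring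

theorem skewN_ne_zero (r : ℕ) {a : F} (ha : a ≠ 0) : skewN q r a ≠ 0 := by
  induction r with
  | zero => simp [skewN]
  | succ r ih => exact mul_ne_zero (pow_ne_zero q ih) ha

theorem skewN_pow_sub_one_mul (hq : q ≠ 0) (r : ℕ) (a : F) :
    skewN q r (a ^ (q - 1)) * a = a ^ q ^ r := by
  induction r with
  | zero => simp [skewN]
  | succ r ih =>
    calc skewN q (r + 1) (a ^ (q - 1)) * a = (skewN q r (a ^ (q - 1)) * a) ^ q := by
          rw [skewN, mul_assoc, ← pow_succ, Nat.sub_add_cancel (Nat.one_le_iff_ne_zero.2 hq),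
            mul_pow]
      _ = a ^ q ^ (r + 1) := by rw [ih, ← pow_mul, pow_succ]

end SkewNorm

section FixedField

variable (F : Type*) [Field F] (p m : ℕ) [ExpChar F p]

-- the subfield `𝔽_q`, `q = p ^ m`, when `F` contains it
def iterateFrobeniusFixedField : Subfield F :=
  (iterateFrobenius F p m).eqLocusField (RingHom.id F)

variable {F p m}

@[simp]
theorem mem_iterateFrobeniusFixedField {x : F} :
    x ∈ iterateFrobeniusFixedField F p m ↔ x ^ p ^ m = x := Iff.rfl

theorem pow_pow_eq_self_of_mem_iterateFrobeniusFixedField {x : F}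
    (hx : x ∈ iterateFrobeniusFixedField F p m) (r : ℕ) : x ^ (p ^ m) ^ r = x := by
  induction r with
  | zero => simp
  | succ r ih => rw [pow_succ, pow_mul, ih, mem_iterateFrobeniusFixedField.1 hx]

end FixedField

section Moore

variable {F : Type*} [Field F] {q k : ℕ}

def mooreMatrix (q : ℕ) (v : Fin k → F) : Matrix (Fin k) (Fin k) F :=
  of fun r i => v i ^ q ^ (r : ℕ)

noncomputable def linearizedPoly (q : ℕ) (c : Fin k → F) : F[X] :=
  ∑ r, C (c r) * X ^ q ^ (r : ℕ)

theorem eval_linearizedPoly (c : Fin k → F) (x : F) :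
    (linearizedPoly q c).eval x = ∑ r, c r * x ^ q ^ (r : ℕ) := by
  simp [linearizedPoly, eval_finsetSum]

theorem coeff_linearizedPoly_pow (hq : 1 < q) (c : Fin k → F) (r : Fin k) :
    (linearizedPoly q c).coeff (q ^ (r : ℕ)) = c r := by
  rw [linearizedPoly, finsetSum_coeff, Finset.sum_eq_single r]
  · simp
  · intro r' _ hne
    rw [coeff_C_mul_X_pow, if_neg fun h => hne (Fin.ext (Nat.pow_right_injective hq h).symm)]
  · simp

theorem linearizedPoly_ne_zero (hq : 1 < q) {c : Fin k → F} (hc : c ≠ 0) :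
    linearizedPoly q c ≠ 0 := by
  obtain ⟨r, hr⟩ := Function.ne_iff.mp hc
  intro h
  exact hr (by rw [← coeff_linearizedPoly_pow hq c r, h, coeff_zero]; rfl)

theorem natDegree_linearizedPoly_lt (hq : 1 < q) (c : Fin k → F) :
    (linearizedPoly q c).natDegree < q ^ k := by
  cases k with
  | zero => simp [linearizedPoly]
  | succ k =>
    refine (natDegree_sum_le_of_forall_le _ _ fun r _ => ?_).trans_lt
      (Nat.pow_lt_pow_right hq k.lt_succ_self)
    exact (natDegree_C_mul_X_pow_le _ _).trans (Nat.pow_le_pow_right (by omega) r.is_le)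

variable {p m : ℕ} [ExpChar F p]

theorem eval_linearizedPoly_sum_smul (c : Fin k → F) {ι : Type*} [Fintype ι]
    (a : ι → iterateFrobeniusFixedField F p m) (v : ι → F) :
    (linearizedPoly (p ^ m) c).eval (∑ i, a i • v i) =
      ∑ i, a i • (linearizedPoly (p ^ m) c).eval (v i) := by
  have hfrob (r : ℕ) : (∑ i, a i • v i) ^ (p ^ m) ^ r = ∑ i, (a i : F) * v i ^ (p ^ m) ^ r := by
    rw [← pow_mul, sum_pow_char_pow]
    simp only [Subfield.smul_def, smul_eq_mul, mul_pow, pow_mul,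
      pow_pow_eq_self_of_mem_iterateFrobeniusFixedField (a _).2]
  simp_rw [eval_linearizedPoly, hfrob, Subfield.smul_def, smul_eq_mul, Finset.mul_sum]
  rw [Finset.sum_comm]
  simp only [mul_left_comm]

theorem det_mooreMatrix_ne_zero (hq : 1 < p ^ m)
    (hK : p ^ m ≤ Nat.card (iterateFrobeniusFixedField F p m)) {v : Fin k → F}
    (hv : LinearIndependent (iterateFrobeniusFixedField F p m) v) :
    (mooreMatrix (p ^ m) v).det ≠ 0 := by
  classical
  intro hdet
  obtain ⟨c, hc, hcv⟩ := Matrix.exists_vecMul_eq_zero_iff.mpr hdet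
  have : Finite (iterateFrobeniusFixedField F p m) := Nat.finite_of_card_ne_zero (by omega)
  have := Fintype.ofFinite (iterateFrobeniusFixedField F p m)
  have hroot (i : Fin k) : (linearizedPoly (p ^ m) c).eval (v i) = 0 := by
    simpa [eval_linearizedPoly, mooreMatrix, vecMul, dotProduct] using congrFun hcv i
  refine linearizedPoly_ne_zero hq hc (eq_zero_of_natDegree_lt_card_of_eval_eq_zero _
    hv.fintypeLinearCombination_injective (fun a => ?_) ?_)
  · simp [Fintype.linearCombination_apply, eval_linearizedPoly_sum_smul, hroot]
  · calc _ < (p ^ m) ^ k := natDegree_linearizedPoly_lt hq c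
      _ ≤ Nat.card (iterateFrobeniusFixedField F p m) ^ k := Nat.pow_le_pow_left hK k
      _ = _ := by rw [Fintype.card_fun, Fintype.card_fin, Nat.card_eq_fintype_card]

end Moore

theorem linearIndependent_sum_pow_smul {K V : Type*} [CommRing K] [IsDomain K] [AddCommGroup V]
    [Module K V] {k s : ℕ} (hks : k ≤ s) {μ : Fin k → K} (hμ : Injective μ) {b : Fin s → V}
    (hb : LinearIndependent K b) :
    LinearIndependent K fun i => ∑ j : Fin s, μ i ^ (j : ℕ) • b j := by
  rw [Fintype.linearIndependent_iff] at hb ⊢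
  intro c hc
  have hcoef (j : Fin s) : ∑ i, c i * μ i ^ (j : ℕ) = 0 := by
    refine hb (fun j => ∑ i, c i * μ i ^ (j : ℕ)) ?_ j
    rw [← hc]
    simp only [Finset.sum_smul, Finset.smul_sum, smul_smul]
    exact Finset.sum_comm
  exact congrFun (eq_zero_of_forall_pow_sum_mul_pow_eq_zero hμ fun j => hcoef (Fin.castLE hks j))

theorem le_natCard_of_surjective_linearCombination {R M : Type*} [Semiring R] [Finite R]
    [AddCommMonoid M] [Module R M] [Nontrivial M] {q s : ℕ} {b : Fin s → M}
    (hb : Surjective (Fintype.linearCombination R b)) (hM : Nat.card M = q ^ s) :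
    q ≤ Nat.card R := by
  have : Finite M := Finite.of_surjective _ hb
  have hs : s ≠ 0 := by
    rintro rfl
    have := Finite.one_lt_card (α := M)
    rw [hM, pow_zero] at this
    exact lt_irrefl 1 this
  refine (Nat.pow_le_pow_iff_left hs).1 ?_
  calc q ^ s = Nat.card M := hM.symm
    _ ≤ Nat.card (Fin s → R) := Nat.card_le_card_of_surjective _ hb
    _ = Nat.card R ^ s := by rw [Nat.card_fun, Nat.card_fin]

section Construction

variable {F : Type*} [Field F] {q k n : ℕ}

theorem linearIndependent_alph {K : Subfield F} {b : Fin (2 * k) → F} {μ : Fin k → K}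
    (hμ : Injective μ) (hb : LinearIndependent K b) :
    LinearIndependent K fun i => alph k (μ i : F) b := by
  have hα : (fun i => alph k (μ i : F) b) =
      fun i => ∑ j : Fin k, μ i ^ (j : ℕ) • (b ∘ Fin.castLE (by omega)) j := by
    funext i
    simp [alph, Subfield.smul_def]
  rw [hα]
  exact linearIndependent_sum_pow_smul le_rfl hμ (hb.comp _ (Fin.castLE_injective _))

theorem linearIndependent_bet {K : Subfield F} {b : Fin (2 * k) → F} {μ : Fin k → K}
    (hμ : Injective μ) (hb : LinearIndependent K b) :
    LinearIndependent K fun i => bet k (μ i : F) b := by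
  have hβ : (fun i => bet k (μ i : F) b) = fun i => ∑ j : Fin (2 * k), μ i ^ (j : ℕ) • b j := by
    funext i
    simp [bet, Subfield.smul_def]
  rw [hβ]
  exact linearIndependent_sum_pow_smul (by omega) hμ hb

theorem submatrix_G0mat (hq : q ≠ 0) (lam : Fin n → F) (b : Fin (2 * k) → F) (g : Fin k → Fin n) :
    (G0mat q k n lam b).submatrix id g = mooreMatrix q fun i => alph k (lam (g i)) b := by
  ext r i
  exact skewN_pow_sub_one_mul hq _ _

theorem det_submatrix_G1mat (hq : q ≠ 0) (γ : F) (lam : Fin n → F) (b : Fin (2 * k) → F)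
    (g : Fin k → Fin n) : ((G1mat q k n γ lam b).submatrix id g).det =
      (∏ r : Fin k, skewN q r γ) * (mooreMatrix q fun i => bet k (lam (g i)) b).det := by
  rw [← det_mul_column]
  congr 1
  ext r i
  rw [submatrix_apply, G1mat, mooreMatrix, of_apply, of_apply, of_apply, id, skewN_mul_s12,
    mul_right_comm, skewN_pow_sub_one_mul hq, mul_comm]

end Construction

theorem construction_submatrices_invertible_general (q k n : ℕ)
    (hq : IsPrimePow q)
    (F : Type*) [Field F] [Fintype F] (hF : Fintype.card F = q ^ (2 * k))
    (γ : F) (hγ : orderOf γ = q ^ (2 * k) - 1)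
    (lam : Fin n → F) (hlam : Function.Injective lam) (hlamq : ∀ i, (lam i) ^ q = lam i)
    (b : Fin (2 * k) → F)
    (hbi : ∀ c : Fin (2 * k) → F, (∀ j, (c j) ^ q = c j) → ∑ j, c j * b j = 0 → ∀ j, c j = 0)
    (hbs : ∀ x : F, ∃ c : Fin (2 * k) → F, (∀ j, (c j) ^ q = c j) ∧ x = ∑ j, c j * b j) :
    (∀ g : Fin k ↪ Fin n, ((G0mat q k n lam b).submatrix id ⇑g).det ≠ 0) ∧
    (∀ g : Fin k ↪ Fin n, ((G1mat q k n γ lam b).submatrix id ⇑g).det ≠ 0) := by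
  obtain ⟨p, m, hp, hm, rfl⟩ := hq
  have : Fact p.Prime := ⟨hp.nat_prime⟩
  have : CharP F p := charP_of_card_eq_prime_pow (hF.trans (pow_mul p m _).symm)
  have hq : 1 < p ^ m := Nat.one_lt_pow hm.ne' hp.nat_prime.one_lt
  set K := iterateFrobeniusFixedField F p m
  have hb : LinearIndependent K b := Fintype.linearIndependent_iff.2 fun c hc j =>
    Subtype.ext (hbi (fun j => c j) (fun j => (c j).2) (by simpa [Subfield.smul_def] using hc) j)
  have hK : p ^ m ≤ Nat.card K := by
    refine le_natCard_of_surjective_linearCombination (b := b) (fun x => ?_)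
      (by rw [Nat.card_eq_fintype_card, hF])
    obtain ⟨c, hc, rfl⟩ := hbs x
    exact ⟨fun j => ⟨c j, hc j⟩, by simp [Fintype.linearCombination_apply, Subfield.smul_def]⟩
  have hγ0 : γ ≠ 0 := by
    rintro rfl
    have := Fintype.one_lt_card (α := F)
    rw [orderOf_zero, ← hF] at hγ
    omega
  let μ : Fin n → K := fun i => ⟨lam i, hlamq i⟩
  have hμ : Injective μ := fun i j h => hlam (congrArg Subtype.val h)
  refine ⟨fun g => ?_, fun g => ?_⟩
  · rw [submatrix_G0mat (pow_ne_zero m hp.ne_zero)]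
    exact det_mooreMatrix_ne_zero hq hK (linearIndependent_alph (μ := μ ∘ g) (hμ.comp g.injective) hb)
  · rw [det_submatrix_G1mat (pow_ne_zero m hp.ne_zero)]
    exact mul_ne_zero (Finset.prod_ne_zero_iff.2 fun r _ => skewN_ne_zero r hγ0)
      (det_mooreMatrix_ne_zero hq hK (linearIndependent_bet (μ := μ ∘ g) (hμ.comp g.injective) hb))

/-- In Construction 1, every `k × k` submatrix of `G_0` and of `G_1` is invertible. -/
theorem construction_submatrices_invertible (q k n : ℕ)
    (hq : IsPrimePow q) (hq3 : 3 ≤ q) (hqn : n ≤ q) (hk : 0 < k) (hkn : k < n)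
    (F : Type*) [Field F] [Fintype F] (hF : Fintype.card F = q ^ (2 * k))
    (γ : F) (hγ : orderOf γ = q ^ (2 * k) - 1)
    (lam : Fin n → F) (hlam : Function.Injective lam) (hlamq : ∀ i, (lam i) ^ q = lam i)
    (b : Fin (2 * k) → F)
    (hbi : ∀ c : Fin (2 * k) → F, (∀ j, (c j) ^ q = c j) → ∑ j, c j * b j = 0 → ∀ j, c j = 0)
    (hbs : ∀ x : F, ∃ c : Fin (2 * k) → F, (∀ j, (c j) ^ q = c j) ∧ x = ∑ j, c j * b j) :
    (∀ g : Fin k ↪ Fin n, ((G0mat q k n lam b).submatrix id ⇑g).det ≠ 0) ∧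
    (∀ g : Fin k ↪ Fin n, ((G1mat q k n γ lam b).submatrix id ⇑g).det ≠ 0) :=
  construction_submatrices_invertible_general q k n hq F hF γ hγ lam hlam hlamq b hbi hbs
end

section
/- In the setting of Construction 1, the k×n polynomial matrix G(D) = G_0 + G_1 D is minimal: its overall constraint length is minimal among all generator matrices of the convolutional code generated by G(D). -/
/-!
Every entry of `G(D) = G₀ + G₁ D` has degree at most one, so its constraint length is at most `k`.
Conversely, the `k × k` minor on the first `k` columns has degree exactly `k`: its coefficient of
`D^k` is the corresponding minor of `G₁`, which is the Moore determinant of `β₁, …, β_k` up to the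
nonzero row factors `γ^(1 + q + ⋯ + q^(r-1))`. The `βᵢ` are `𝔽_q`-linearly independent (their
coordinates in the basis `b` form a Vandermonde matrix), and a vanishing row combination of their
Moore matrix would be a `q`-polynomial of degree `≤ q^(k-1)` vanishing on all `q^k` elements of
their `𝔽_q`-span. Here `𝔽_q` is the fixed field of `x ↦ x^q`; it has `q` elements because `b`
is a basis of `F` over it. Any other generator matrix `G'` of the same code satisfies `G = A G'` and
`G' = B G`, so its minor on the same columns is a nonzero multiple of that of `G` and has degree
at least `k`; and the degree of a minor is bounded by the constraint length.
-/

open Polynomial Matrix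

/-- The `i`-th row degree `ν_i = max_j deg g_{ij}(D)` of a polynomial matrix. -/
noncomputable def rowDeg {F : Type*} [Field F] {k n : ℕ}
    (G : Matrix (Fin k) (Fin n) (Polynomial F)) (i : Fin k) : ℕ :=
  Finset.univ.sup fun j => (G i j).natDegree

/-- The overall constraint length `ν = Σ_i ν_i` of a polynomial matrix. -/
noncomputable def constraintLen {F : Type*} [Field F] {k n : ℕ}
    (G : Matrix (Fin k) (Fin n) (Polynomial F)) : ℕ :=
  ∑ i, rowDeg G i

/-- A generator matrix is minimal if its overall constraint length is minimal among all
generator matrices of the code it generates. -/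
def IsMinimalGen {F : Type*} [Field F] {k n : ℕ}
    (G : Matrix (Fin k) (Fin n) (Polynomial F)) : Prop :=
  ∀ G' : Matrix (Fin k) (Fin n) (Polynomial F),
    LinearMap.range (Matrix.vecMulLinear G') = LinearMap.range (Matrix.vecMulLinear G) →
    constraintLen G ≤ constraintLen G'

open Finset

section ConstraintLength

variable {F : Type*} [Field F] {k n : ℕ}

theorem natDegree_det_le_constraintLen (M : Matrix (Fin k) (Fin k) F[X]) :
    M.det.natDegree ≤ constraintLen M := by
  rw [Matrix.det_apply]
  refine natDegree_sum_le_of_forall_le _ _ fun σ _ => ?_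
  refine (natDegree_smul_le _ _).trans <| (natDegree_prod_le _ _).trans ?_
  calc ∑ i, (M (σ i) i).natDegree = ∑ r, (M r (σ.symm r)).natDegree :=
        Fintype.sum_equiv σ _ _ fun i => by simp
    _ ≤ constraintLen M := sum_le_sum fun r _ =>
        Finset.le_sup (f := fun j => (M r j).natDegree) (mem_univ (σ.symm r))

theorem constraintLen_submatrix_le (G : Matrix (Fin k) (Fin n) F[X]) (S : Fin k → Fin n) :
    constraintLen (G.submatrix id S) ≤ constraintLen G :=
  sum_le_sum fun r _ => Finset.sup_le fun j _ =>
    Finset.le_sup (f := fun j => (G r j).natDegree) (mem_univ (S j))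

theorem constraintLen_le_of_natDegree_le {G : Matrix (Fin k) (Fin n) F[X]} {d : ℕ}
    (h : ∀ r j, (G r j).natDegree ≤ d) : constraintLen G ≤ k * d := by
  calc constraintLen G ≤ ∑ _r : Fin k, d := sum_le_sum fun r _ => Finset.sup_le fun j _ => h r j
    _ = k * d := by simp

end ConstraintLength

theorem Matrix.exists_mul_eq_of_range_vecMulLinear_le {R : Type*} [CommSemiring R]
    {l m n : Type*} [Fintype l] [Fintype m] [DecidableEq l] {G : Matrix l n R}
    {G' : Matrix m n R} (h : LinearMap.range G.vecMulLinear ≤ LinearMap.range G'.vecMulLinear) :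
    ∃ A : Matrix l m R, A * G' = G := by
  choose A hA using fun r => @h (G r) ⟨Pi.single r 1, by ext; simp⟩
  exact ⟨of A, ext fun r j => by
    simpa [Matrix.mul_apply, vecMul, dotProduct] using congrFun (hA r) j⟩

section Minimality

variable {F : Type*} [Field F] {k n : ℕ}

theorem natDegree_det_submatrix_le_of_range_eq {G G' : Matrix (Fin k) (Fin n) F[X]}
    (h : LinearMap.range G'.vecMulLinear = LinearMap.range G.vecMulLinear) (S : Fin k → Fin n)
    (hG : (G.submatrix id S).det ≠ 0) :
    (G.submatrix id S).det.natDegree ≤ (G'.submatrix id S).det.natDegree := by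
  have det_submatrix_mul :
      ∀ {H H' : Matrix (Fin k) (Fin n) F[X]} {P : Matrix (Fin k) (Fin k) F[X]}, P * H = H' →
        (H'.submatrix id S).det = P.det * (H.submatrix id S).det := by
    rintro H _ P rfl
    exact det_mul P (H.submatrix id S)
  obtain ⟨A, hA⟩ := exists_mul_eq_of_range_vecMulLinear_le h.ge
  obtain ⟨B, hB⟩ := exists_mul_eq_of_range_vecMulLinear_le h.le
  have hG' : (G'.submatrix id S).det ≠ 0 := right_ne_zero_of_mul (det_submatrix_mul hA ▸ hG)
  rw [det_submatrix_mul hB] at hG' ⊢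
  rw [natDegree_mul (left_ne_zero_of_mul hG') hG]
  omega

theorem isMinimalGen_of_constraintLen_le_natDegree_det {G : Matrix (Fin k) (Fin n) F[X]}
    (S : Fin k → Fin n) (h : constraintLen G ≤ (G.submatrix id S).det.natDegree) :
    IsMinimalGen G := by
  intro G' hrange
  by_cases hG : (G.submatrix id S).det = 0
  · rw [hG, natDegree_zero, Nat.le_zero] at h
    simp [h]
  calc constraintLen G ≤ (G.submatrix id S).det.natDegree := h
    _ ≤ (G'.submatrix id S).det.natDegree := natDegree_det_submatrix_le_of_range_eq hrange S hG
    _ ≤ constraintLen (G'.submatrix id S) := natDegree_det_le_constraintLen _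
    _ ≤ constraintLen G' := constraintLen_submatrix_le G' S

end Minimality

section LinearizedPolynomial

variable {R : Type*} [Semiring R]

theorem coeff_sum_C_mul_X_pow_pow {q : ℕ} (hq : 1 < q) {k : ℕ} (a : Fin k → R) (r : Fin k) :
    (∑ s : Fin k, C (a s) * X ^ q ^ (s : ℕ)).coeff (q ^ (r : ℕ)) = a r := by
  rw [finsetSum_coeff, sum_eq_single r (fun s _ hs => ?_) (by simp)]
  · simp
  · rw [coeff_C_mul_X_pow, if_neg fun h => hs (Fin.ext (Nat.pow_right_injective hq h).symm)]

theorem natDegree_sum_C_mul_X_pow_pow_lt {q : ℕ} (hq : 1 < q) {k : ℕ} (hk : k ≠ 0)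
    (a : Fin k → R) : (∑ s : Fin k, C (a s) * X ^ q ^ (s : ℕ)).natDegree < q ^ k := by
  refine lt_of_le_of_lt (natDegree_sum_le_of_forall_le _ _ fun s _ => ?_)
    (Nat.pow_lt_pow_right hq (Nat.sub_one_lt hk))
  exact (natDegree_C_mul_X_pow_le _ _).trans (Nat.pow_le_pow_right (by omega) (by omega))

end LinearizedPolynomial

section Frobenius

variable {F : Type*} [Field F] {p : ℕ} [ExpChar F p] (e : ℕ)

theorem injective_sum_mul_of_fixed {m : ℕ} {v : Fin m → F}
    (hv : ∀ c : Fin m → F, (∀ i, c i ^ p ^ e = c i) → ∑ i, c i * v i = 0 → c = 0) :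
    Function.Injective fun c : Fin m → {x : F // x ^ p ^ e = x} => ∑ i, (c i : F) * v i := by
  intro c c' hcc
  have hdiff := hv (fun i => c i - c' i) (fun i => by rw [sub_pow_expChar_pow, (c i).2, (c' i).2])
    (by simp only [sub_mul, sum_sub_distrib]; exact sub_eq_zero.mpr hcc)
  exact funext fun i => Subtype.ext (sub_eq_zero.mp (congrFun hdiff i))

theorem card_fixed_pow_eq_card {m : ℕ} {b : Fin m → F}
    (hbi : ∀ c : Fin m → F, (∀ j, c j ^ p ^ e = c j) → ∑ j, c j * b j = 0 →
      ∀ j, c j = 0)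
    (hbs : ∀ x : F, ∃ c : Fin m → F, (∀ j, c j ^ p ^ e = c j) ∧ x = ∑ j, c j * b j) :
    Nat.card {x : F // x ^ p ^ e = x} ^ m = Nat.card F := by
  have hbij :
      Function.Bijective fun c : Fin m → {x : F // x ^ p ^ e = x} => ∑ j, (c j : F) * b j :=
    ⟨injective_sum_mul_of_fixed e fun c hc h => funext (hbi c hc h), fun x => by
      obtain ⟨c, hc, rfl⟩ := hbs x
      exact ⟨fun j => ⟨c j, hc j⟩, rfl⟩⟩
  rw [← Nat.card_congr (Equiv.ofBijective _ hbij), Nat.card_fun, Nat.card_fin]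

theorem eq_zero_of_sum_mul_bet_eq_zero {k : ℕ} {b : Fin (2 * k) → F}
    (hbi : ∀ c : Fin (2 * k) → F, (∀ j, c j ^ p ^ e = c j) → ∑ j, c j * b j = 0 →
      ∀ j, c j = 0)
    {m : ℕ} (hm : m ≤ 2 * k) {μ : Fin m → F} (hμ : Function.Injective μ)
    (hμq : ∀ i, μ i ^ p ^ e = μ i) {c : Fin m → F} (hc : ∀ i, c i ^ p ^ e = c i)
    (h : ∑ i, c i * bet k (μ i) b = 0) : c = 0 := by
  have hcoeff : ∀ j : Fin (2 * k), ∑ i, c i * μ i ^ (j : ℕ) = 0 := by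
    refine hbi _ (fun j => ?_) ?_
    · simp only [← iterateFrobenius_def, map_sum, map_mul, map_pow]
      simp only [iterateFrobenius_def, hc, hμq]
    · rw [← h]
      simp only [bet, mul_sum, sum_mul]
      rw [sum_comm]
      exact sum_congr rfl fun j _ => sum_congr rfl fun i _ => by ring
  refine eq_zero_of_vecMul_eq_zero (det_vandermonde_ne_zero_iff.mpr hμ) (funext fun j => ?_)
  simpa [vecMul, dotProduct, vandermonde_apply] using hcoeff (Fin.castLE hm j)

theorem eval_sum_C_mul_X_pow_pow_sum_mul {k m : ℕ} (a : Fin k → F) (v c : Fin m → F)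
    (hc : ∀ i, c i ^ p ^ e = c i) :
    (∑ r : Fin k, C (a r) * X ^ (p ^ e) ^ (r : ℕ)).eval (∑ i, c i * v i)
      = ∑ i, c i * ∑ r : Fin k, a r * v i ^ (p ^ e) ^ (r : ℕ) := by
  have hfix : ∀ i (r : ℕ), c i ^ (p ^ e) ^ r = c i := fun i r => by
    simpa [pow_iterate] using Function.iterate_fixed (f := fun x : F => x ^ p ^ e) (hc i) r
  have hpow : ∀ r : ℕ, (∑ i, c i * v i) ^ (p ^ e) ^ r = ∑ i, c i * v i ^ (p ^ e) ^ r := by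
    intro r
    rw [← pow_mul, ← iterateFrobenius_def, map_sum]
    simp only [iterateFrobenius_def, pow_mul, mul_pow, hfix]
  simp only [eval_finsetSum, eval_mul, eval_C, eval_pow, eval_X, hpow, mul_sum]
  rw [sum_comm]
  exact sum_congr rfl fun i _ => sum_congr rfl fun r _ => by ring

theorem det_moore_ne_zero (hq : 1 < p ^ e) (hK : p ^ e ≤ Nat.card {x : F // x ^ p ^ e = x})
    {k : ℕ} {v : Fin k → F}
    (hv : ∀ c : Fin k → F, (∀ i, c i ^ p ^ e = c i) → ∑ i, c i * v i = 0 → c = 0) :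
    (of fun r i : Fin k => v i ^ (p ^ e) ^ (r : ℕ)).det ≠ 0 := by
  intro hdet
  obtain ⟨a, ha, haM⟩ := exists_vecMul_eq_zero_iff.mpr hdet
  have hk : k ≠ 0 := by
    rintro rfl
    exact ha (Subsingleton.elim _ _)
  set L : F[X] := ∑ r : Fin k, C (a r) * X ^ (p ^ e) ^ (r : ℕ)
  have hroot : ∀ c : Fin k → {x : F // x ^ p ^ e = x}, L.eval (∑ i, (c i : F) * v i) = 0 := by
    intro c
    rw [eval_sum_C_mul_X_pow_pow_sum_mul e a v _ fun i => (c i).2]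
    refine sum_eq_zero fun i _ => ?_
    exact mul_eq_zero_of_right _ (by simpa [vecMul, dotProduct] using congrFun haM i)
  have : Finite {x : F // x ^ p ^ e = x} := Nat.finite_of_card_ne_zero (by omega)
  have := Fintype.ofFinite {x : F // x ^ p ^ e = x}
  have hL : L = 0 := by
    refine eq_zero_of_natDegree_lt_card_of_eval_eq_zero L (injective_sum_mul_of_fixed e hv)
      hroot ?_
    calc L.natDegree < (p ^ e) ^ k := natDegree_sum_C_mul_X_pow_pow_lt hq hk a
      _ ≤ Nat.card {x : F // x ^ p ^ e = x} ^ k := Nat.pow_le_pow_left hK k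
      _ = Fintype.card (Fin k → {x : F // x ^ p ^ e = x}) := by simp [Nat.card_eq_fintype_card]
  refine ha (funext fun r => ?_)
  have hcoeff := coeff_sum_C_mul_X_pow_pow hq a r
  change L.coeff _ = _ at hcoeff
  rw [hL, coeff_zero] at hcoeff
  exact hcoeff.symm

end Frobenius

section Construction

variable {F : Type*} [Field F]

theorem skewN_pow_sub_one_mul_mul {q : ℕ} (hq : 1 ≤ q) (x γ : F) (r : ℕ) :
    skewN q r (x ^ (q - 1) * γ) * x = γ ^ (∑ t ∈ range r, q ^ t) * x ^ q ^ r := by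
  induction r with
  | zero => simp [skewN]
  | succ r ih =>
    have hx : x ^ (q - 1) * x = x ^ q := by rw [← pow_succ, Nat.sub_add_cancel hq]
    calc skewN q (r + 1) (x ^ (q - 1) * γ) * x
        = (skewN q r (x ^ (q - 1) * γ) * x) ^ q * γ := by
          rw [skewN, mul_pow, ← hx]; ring
      _ = _ := by
          simp only [ih, sum_range_succ', pow_succ, ← sum_mul, pow_zero, mul_pow,
            ← pow_mul]
          ring

theorem det_G1mat_submatrix {q : ℕ} (hq : 1 ≤ q) (k n : ℕ) (γ : F) (lam : Fin n → F)
    (b : Fin (2 * k) → F) (S : Fin k → Fin n) :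
    ((G1mat q k n γ lam b).submatrix id S).det = (∏ r : Fin k, γ ^ (∑ t ∈ range r, q ^ t)) *
      (of fun r i : Fin k => bet k (lam (S i)) b ^ q ^ (r : ℕ)).det := by
  rw [← det_mul_column]
  exact congrArg det (Matrix.ext fun r i => skewN_pow_sub_one_mul_mul hq _ _ _)

theorem natDegree_GpolyMat_le_one (q k n : ℕ) (γ : F) (lam : Fin n → F) (b : Fin (2 * k) → F)
    (r : Fin k) (i : Fin n) : (GpolyMat q k n γ lam b r i).natDegree ≤ 1 := by
  simp only [GpolyMat, of_apply]
  compute_degree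

theorem GpolyMat_submatrix (q k n : ℕ) (γ : F) (lam : Fin n → F) (b : Fin (2 * k) → F)
    (S : Fin k → Fin n) :
    (GpolyMat q k n γ lam b).submatrix id S =
      (X : F[X]) • ((G1mat q k n γ lam b).submatrix id S).map C
        + ((G0mat q k n lam b).submatrix id S).map C := by
  refine Matrix.ext fun r i => ?_
  simp only [GpolyMat, submatrix_apply, id, of_apply, Matrix.add_apply, Matrix.smul_apply,
    map_apply, smul_eq_mul]
  ring

end Construction

theorem construction_generator_minimal_general (q k n : ℕ)
    (hq : IsPrimePow q) (hk : 0 < k) (hkn : k < n)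
    (F : Type*) [Field F] [Fintype F] (hF : Fintype.card F = q ^ (2 * k))
    (γ : F) (hγ : orderOf γ = q ^ (2 * k) - 1)
    (lam : Fin n → F) (hlam : Function.Injective lam) (hlamq : ∀ i, (lam i) ^ q = lam i)
    (b : Fin (2 * k) → F)
    (hbi : ∀ c : Fin (2 * k) → F, (∀ j, (c j) ^ q = c j) → ∑ j, c j * b j = 0 → ∀ j, c j = 0)
    (hbs : ∀ x : F, ∃ c : Fin (2 * k) → F, (∀ j, (c j) ^ q = c j) ∧ x = ∑ j, c j * b j) :
    IsMinimalGen (GpolyMat q k n γ lam b) := by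
  obtain ⟨p, e, hp, he, rfl⟩ := hq
  have : Fact p.Prime := ⟨hp.nat_prime⟩
  have : CharP F p := charP_of_card_eq_prime_pow (by rw [hF, ← pow_mul])
  have hq1 : 1 < p ^ e := Nat.one_lt_pow he.ne' hp.nat_prime.one_lt
  have hγ0 : γ ≠ 0 := fun h => by
    have := Nat.one_lt_pow (by omega : 2 * k ≠ 0) hq1
    rw [orderOf_eq_zero_iff_eq_zero.mpr h] at hγ
    omega
  have hK : Nat.card {x : F // x ^ p ^ e = x} = p ^ e :=
    Nat.pow_left_injective (by omega : 2 * k ≠ 0)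
      (by dsimp only; rw [card_fixed_pow_eq_card e hbi hbs, Nat.card_eq_fintype_card, hF])
  set S : Fin k → Fin n := Fin.castLE hkn.le
  have hG1 : ((G1mat (p ^ e) k n γ lam b).submatrix id S).det ≠ 0 := by
    rw [det_G1mat_submatrix hq1.le]
    refine mul_ne_zero (prod_ne_zero_iff.mpr fun r _ => pow_ne_zero _ hγ0)
      (det_moore_ne_zero e hq1 hK.ge fun c hc => ?_)
    exact eq_zero_of_sum_mul_bet_eq_zero e hbi (by omega) (hlam.comp (Fin.castLE_injective _))
      (fun i => hlamq _) hc
  refine isMinimalGen_of_constraintLen_le_natDegree_det S ?_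
  calc constraintLen (GpolyMat (p ^ e) k n γ lam b) ≤ k * 1 :=
        constraintLen_le_of_natDegree_le (natDegree_GpolyMat_le_one _ _ _ _ _ _)
    _ = Fintype.card (Fin k) := by simp
    _ ≤ _ := by
        rw [GpolyMat_submatrix]
        exact le_natDegree_of_ne_zero (by rwa [coeff_det_X_add_C_card])

/-- In Construction 1, the generator matrix `G(D) = G_0 + G_1 D` is minimal. -/
theorem construction_generator_minimal (q k n : ℕ)
    (hq : IsPrimePow q) (hq3 : 3 ≤ q) (hqn : n ≤ q) (hk : 0 < k) (hkn : k < n)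
    (F : Type*) [Field F] [Fintype F] (hF : Fintype.card F = q ^ (2 * k))
    (γ : F) (hγ : orderOf γ = q ^ (2 * k) - 1)
    (lam : Fin n → F) (hlam : Function.Injective lam) (hlamq : ∀ i, (lam i) ^ q = lam i)
    (b : Fin (2 * k) → F)
    (hbi : ∀ c : Fin (2 * k) → F, (∀ j, (c j) ^ q = c j) → ∑ j, c j * b j = 0 → ∀ j, c j = 0)
    (hbs : ∀ x : F, ∃ c : Fin (2 * k) → F, (∀ j, (c j) ^ q = c j) ∧ x = ∑ j, c j * b j) :
    IsMinimalGen (GpolyMat q k n γ lam b) :=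
  construction_generator_minimal_general q k n hq hk hkn F hF γ hγ lam hlam hlamq b hbi hbs
end

section
/- In the setting of Construction 1 with n > 2k, let A, B ⊆ {1, ..., n} with |A| ≤ k and |B| = 2k - |A|. Then the 2k × 2k matrix P = [[G_0|_A, G_1|_B], [0, G_0|_B]] is invertible, where G_0|_A denotes the k×|A| submatrix of G_0 consisting of the columns indexed by A, and similarly for G_1|_B and G_0|_B. (Equivalently, the first truncated matrix G_1^c = [[G_0, G_1], [0, G_0]] has the property that every 2k × 2k full-size minor formed by columns 1 ≤ t_1 < ... < t_{2k} ≤ 2n with t_{k+1} ≥ n+1 is nonzero.) -/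
open Polynomial Matrix

/-!
Let `σ x = x ^ q` and `D_a x = a * σ x`, so that `(G₀)_{r,i} = D_1^r α_i` and
`(G₁)_{r,i} = D_γ^r β_i`. A nonzero left kernel vector `(c, d)` of `P` gives skew polynomials
`f = ∑ c_r X^r`, `g = ∑ d_r X^r` of degree `< k` in `F[X; σ]` with `f(D_1) α_i = 0` for `i ∈ A`
and `f(D_γ) β_i + g(D_1) α_i = 0` for `i ∈ B`.

Right division by `X - ρ` in `F[X; σ]` commutes with evaluation at every `D_a`, and
`ker (D_a - ρ)` has `F_q`-dimension at most one, and is zero unless `a` is `σ`-conjugate to `ρ`.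
By induction on the degree, `dim ker f(D_1) + dim ker f(D_γ) < k` when `1` and `γ` are not
`σ`-conjugate, which holds because a primitive `γ` is not a `(q - 1)`-th power.

On the other hand `ker f(D_1)` contains the `|A|` independent `α_i`. In coordinates with respect
to `b`, the map `μ ↦ f(D_γ) (∑_{j<2k} μ_j b_j) + g(D_1) (∑_{j<k} μ_j b_j)` on `F_q^{2k}` kills the
`2k - |A|` independent Vandermonde vectors `(λ_i^j)_j`, `i ∈ B`, and on the subspace
`μ_0 = ⋯ = μ_{k-1} = 0` it is `f(D_γ)` composed with an injection, so
`dim ker f(D_γ) ≥ k - |A|`. Hence `f = 0`; then `g(D_1)` kills `k` independent `α_i`, so `g = 0`.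
-/

section

open Module LinearMap

section LinearAlgebra

variable {K V W M X : Type*} [Field K] [AddCommGroup V] [Module K V] [AddCommGroup W]
  [Module K W] [AddCommGroup M] [Module K M] [AddCommGroup X] [Module K X]

theorem LinearMap.finrank_ker_comp_le [FiniteDimensional K V] [FiniteDimensional K W]
    (f : V →ₗ[K] W) (g : W →ₗ[K] X) :
    finrank K (ker (g ∘ₗ f)) ≤ finrank K (ker g) + finrank K (ker f) := by
  set U := ker (g ∘ₗ f)
  have hrange : finrank K (range (f.domRestrict U)) ≤ finrank K (ker g) := by
    refine Submodule.finrank_mono ?_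
    rintro _ ⟨x, rfl⟩
    exact x.2
  have hker : finrank K (ker (f.domRestrict U)) = finrank K (ker f) := by
    rw [ker_domRestrict]
    exact (Submodule.comapSubtypeEquivOfLe (ker_le_ker_comp f g)).finrank_eq
  have := (f.domRestrict U).finrank_range_add_finrank_ker
  have := Submodule.finrank_le U
  omega

theorem LinearMap.finrank_ker_add_comp_le [FiniteDimensional K V] [FiniteDimensional K W]
    [FiniteDimensional K M] (e : V →ₗ[K] M) (he : Function.Injective e) (g : M →ₗ[K] X)
    (π : V →ₗ[K] W) (h : W →ₗ[K] X) :
    finrank K (ker (g ∘ₗ e + h ∘ₗ π)) ≤ finrank K (ker g) + finrank K W := by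
  set U := ker (g ∘ₗ e + h ∘ₗ π)
  set π' := π.domRestrict U
  have hker : finrank K (ker π') ≤ finrank K (ker g) := by
    refine LinearMap.finrank_le_finrank_of_injective
      (f := codRestrict (ker g) (e ∘ₗ U.subtype ∘ₗ (ker π').subtype) ?_) ?_
    · rintro ⟨⟨x, hxU⟩, hx⟩
      have hπ : π x = 0 := hx
      have hΘ : g (e x) + h (π x) = 0 := hxU
      rwa [hπ, map_zero, add_zero] at hΘ
    · intro x y hxy
      exact Subtype.ext (Subtype.ext (he (congrArg Subtype.val hxy)))
  have := π'.finrank_range_add_finrank_ker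
  have := Submodule.finrank_le (range π')
  omega

theorem linearIndependent_pow_of_injOn {ι : Type*} {S : Finset ι} {μ : ι → K}
    (hμ : Set.InjOn μ S) {m : ℕ} (hS : S.card ≤ m) :
    LinearIndependent K (fun i : S => fun j : Fin m => μ i ^ (j : ℕ)) := by
  classical
  set v : Fin S.card → K := fun i => μ (S.equivFin.symm i)
  have hv : Function.Injective v := fun i j hij =>
    S.equivFin.symm.injective (Subtype.ext (hμ (S.equivFin.symm i).2 (S.equivFin.symm j).2 hij))
  refine LinearIndependent.of_comp (LinearMap.funLeft K K (Fin.castLE hS)) ?_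
  refine (linearIndependent_equiv' S.equivFin ?_).2
    (linearIndependent_rows_of_det_ne_zero (det_vandermonde_ne_zero_iff.2 hv))
  ext i j
  simp [v, LinearMap.funLeft_apply, vandermonde_apply]

theorem card_le_finrank_ker_of_forall_pow [FiniteDimensional K M] {ι : Type*} {S : Finset ι}
    {μ : ι → K} (hμ : Set.InjOn μ S) {m : ℕ} (hS : S.card ≤ m) (e : (Fin m → K) →ₗ[K] M)
    (he : Function.Injective e) (L : M →ₗ[K] X)
    (h : ∀ i ∈ S, L (e fun j => μ i ^ (j : ℕ)) = 0) :
    S.card ≤ finrank K (ker L) := by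
  have hli : LinearIndependent K fun i : S => (⟨_, h i i.2⟩ : ker L) :=
    LinearIndependent.of_comp (ker L).subtype
      ((linearIndependent_pow_of_injOn hμ hS).map' e (ker_eq_bot.2 he))
  simpa using hli.fintype_card_le_finrank

end LinearAlgebra

namespace Skew

variable {F : Type*} [Field F] (σ : F →+* F)

def fixedField : Subfield F := σ.eqLocusField (RingHom.id F)

def twist (γ : F) : Module.End (fixedField σ) F where
  toFun x := γ * σ x
  map_add' x y := by rw [map_add, mul_add]
  map_smul' t x := by
    have ht : σ t = t := t.2
    simp only [Subfield.smul_def, smul_eq_mul, map_mul, ht, RingHom.id_apply]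
    ring

theorem twist_apply (γ x : F) : twist σ γ x = γ * σ x := rfl

theorem twist_sub_smul_one_apply (γ ρ x : F) :
    (twist σ γ - ρ • 1) x = γ * σ x - ρ * x := rfl

theorem twist_pow_apply_mul (γ ρ x : F) (r : ℕ) :
    (twist σ γ ^ r) (ρ * x) = σ^[r] ρ * (twist σ γ ^ r) x := by
  induction r with
  | zero => rfl
  | succ r ih =>
    rw [pow_succ', Module.End.mul_apply, Module.End.mul_apply, ih, twist_apply, twist_apply,
      map_mul, Function.iterate_succ_apply']
    ring

theorem twist_pow_mul_sub (γ ρ : F) (r : ℕ) :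
    twist σ γ ^ r * (twist σ γ - ρ • 1) = twist σ γ ^ (r + 1) - σ^[r] ρ • twist σ γ ^ r := by
  rw [mul_sub, ← pow_succ]
  congr 1
  ext x
  exact twist_pow_apply_mul σ γ ρ x r

/-- The skew polynomial `∑ c_r X^r ∈ F[X; σ]` evaluated at `twist σ γ`. -/
def evalTwist {m : ℕ} (γ : F) (c : Fin m → F) : Module.End (fixedField σ) F :=
  ∑ r, c r • twist σ γ ^ (r : ℕ)

theorem evalTwist_zero {m : ℕ} (γ : F) : evalTwist σ γ (0 : Fin m → F) = 0 := by
  simp [evalTwist]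

theorem evalTwist_fin_one (γ : F) (c : Fin 1 → F) : evalTwist σ γ c = c 0 • 1 := by
  simp [evalTwist]

theorem evalTwist_snoc {m : ℕ} (γ : F) (c : Fin m → F) (a : F) :
    evalTwist σ γ (Fin.snoc c a) = evalTwist σ γ c + a • twist σ γ ^ m := by
  simp [evalTwist, Fin.sum_univ_castSucc]

theorem evalTwist_eq_init {m : ℕ} (γ : F) (c : Fin (m + 1) → F) :
    evalTwist σ γ c = evalTwist σ γ (Fin.init c) + c (Fin.last m) • twist σ γ ^ m := by
  rw [← evalTwist_snoc, Fin.snoc_init_self]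

/-- Right division by `X - ρ` in `F[X; σ]`. -/
theorem exists_evalTwist_eq_mul_twist_sub_add (ρ : F) :
    ∀ {m : ℕ} (c : Fin (m + 2) → F), ∃ c' : Fin (m + 1) → F,
      c' (Fin.last m) = c (Fin.last (m + 1)) ∧
      ∃ r₀ : F, ∀ γ, evalTwist σ γ c = evalTwist σ γ c' * (twist σ γ - ρ • 1) + r₀ • 1 := by
  intro m
  induction m with
  | zero =>
    intro c
    refine ⟨fun _ => c 1, rfl, c 0 + c 1 * ρ, fun γ => ?_⟩
    rw [evalTwist_eq_init, evalTwist_fin_one, evalTwist_fin_one, smul_mul_assoc, one_mul, pow_one]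
    show c 0 • 1 + c 1 • twist σ γ = _
    module
  | succ m ih =>
    intro c
    set a := c (Fin.last (m + 2))
    obtain ⟨c', hc', r₀, h⟩ := ih (Fin.snoc (Fin.init (Fin.init c))
      (Fin.init c (Fin.last (m + 1)) + a * σ^[m + 1] ρ))
    refine ⟨Fin.snoc c' a, by simp, r₀, fun γ => ?_⟩
    have hc := h γ
    rw [evalTwist_snoc] at hc
    rw [evalTwist_eq_init, evalTwist_eq_init (c := Fin.init c), evalTwist_snoc, add_mul,
      smul_mul_assoc, twist_pow_mul_sub]
    linear_combination (norm := module) hc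

theorem exists_evalTwist_eq_mul_twist_sub_of_mem_ker {m : ℕ} {γ₁ v : F} {c : Fin (m + 2) → F}
    (hv : v ∈ ker (evalTwist σ γ₁ c)) (hv0 : v ≠ 0) :
    ∃ c' : Fin (m + 1) → F, c' (Fin.last m) = c (Fin.last (m + 1)) ∧
      ∀ γ, evalTwist σ γ c = evalTwist σ γ c' * (twist σ γ - (γ₁ * σ v / v) • 1) := by
  obtain ⟨c', hc', r₀, h⟩ := exists_evalTwist_eq_mul_twist_sub_add σ (γ₁ * σ v / v) c
  have hroot : (twist σ γ₁ - (γ₁ * σ v / v) • 1) v = 0 := by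
    rw [twist_sub_smul_one_apply]
    field_simp
    ring
  have hr₀ : r₀ = 0 := by
    have := congrArg (· v) (h γ₁)
    simp only [mem_ker.1 hv, LinearMap.add_apply, Module.End.mul_apply, hroot, map_zero,
      zero_add, LinearMap.smul_apply, Module.End.one_apply, smul_eq_mul] at this
    exact (mul_eq_zero.1 this.symm).resolve_right hv0
  exact ⟨c', hc', fun γ => by rw [h γ, hr₀, zero_smul, add_zero]⟩

def IsConj (a b : F) : Prop := ∃ w ≠ (0 : F), a * σ w = b * w

theorem IsConj.symm {σ : F →+* F} {a b : F} (h : IsConj σ a b) : IsConj σ b a := by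
  obtain ⟨w, hw, h⟩ := h
  have hσw : σ w ≠ 0 := (map_ne_zero σ).2 hw
  refine ⟨w⁻¹, inv_ne_zero hw, ?_⟩
  rw [map_inv₀]
  field_simp
  linear_combination -h

theorem finrank_ker_twist_sub_le_one {γ : F} (hγ : γ ≠ 0) (ρ : F) :
    finrank (fixedField σ) (ker (twist σ γ - ρ • 1)) ≤ 1 := by
  by_cases hbot : ker (twist σ γ - ρ • 1) = ⊥
  · rw [hbot, finrank_bot]
    exact zero_le_one
  obtain ⟨v, hv, hv0⟩ := Submodule.exists_mem_ne_zero_of_ne_bot hbot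
  refine (Submodule.finrank_mono fun x hx => ?_).trans (finrank_span_singleton hv0).le
  rw [mem_ker, twist_sub_smul_one_apply] at hv hx
  have hσv : σ v ≠ 0 := (map_ne_zero σ).2 hv0
  have hfix : σ (x / v) = x / v := by
    rw [map_div₀, div_eq_div_iff hσv hv0]
    refine mul_left_cancel₀ hγ ?_
    linear_combination v * hx - x * hv
  exact Submodule.mem_span_singleton.2 ⟨⟨x / v, hfix⟩, div_mul_cancel₀ x hv0⟩

theorem ker_twist_sub_eq_bot {γ₁ γ₂ ρ v : F} (hv : v ≠ 0) (hρ : ρ * v = γ₁ * σ v)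
    (h : ¬ IsConj σ γ₁ γ₂) : ker (twist σ γ₂ - ρ • 1) = ⊥ := by
  refine eq_bot_iff.2 fun x hx => by_contra fun hx0 => h ⟨v / x, div_ne_zero hv hx0, ?_⟩
  rw [Submodule.mem_bot] at hx0
  rw [mem_ker, twist_sub_smul_one_apply] at hx
  have hσx : σ x ≠ 0 := (map_ne_zero σ).2 hx0
  rw [map_div₀]
  field_simp
  linear_combination x * hρ.symm - v * hx

theorem finrank_ker_evalTwist_add_lt [FiniteDimensional (fixedField σ) F] {γ₁ γ₂ : F}
    (h₁ : γ₁ ≠ 0) (h₂ : γ₂ ≠ 0) (h : ¬ IsConj σ γ₁ γ₂) {m : ℕ} (c : Fin m → F) (hc : c ≠ 0) :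
    finrank (fixedField σ) (ker (evalTwist σ γ₁ c)) +
      finrank (fixedField σ) (ker (evalTwist σ γ₂ c)) < m := by
  induction m generalizing γ₁ γ₂ with
  | zero => exact absurd (Subsingleton.elim c 0) hc
  | succ m ih =>
    by_cases htop : c (Fin.last m) = 0
    · have hinit : Fin.init c ≠ 0 := fun h0 =>
        hc (funext (Fin.lastCases htop fun i => congrFun h0 i))
      rw [evalTwist_eq_init, evalTwist_eq_init (c := c), htop, zero_smul, zero_smul, add_zero,
        add_zero]
      exact (ih h₁ h₂ h _ hinit).trans (Nat.lt_succ_self m)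
    wlog hne : ker (evalTwist σ γ₁ c) ≠ ⊥ generalizing γ₁ γ₂
    · by_cases hne₂ : ker (evalTwist σ γ₂ c) = ⊥
      · rw [not_not.1 hne, hne₂, finrank_bot]
        exact Nat.succ_pos m
      · rw [add_comm]
        exact this h₂ h₁ (fun h' => h h'.symm) hne₂
    obtain ⟨v, hv, hv0⟩ := Submodule.exists_mem_ne_zero_of_ne_bot hne
    rcases m with _ | m
    · rw [mem_ker, evalTwist_fin_one] at hv
      exact absurd ((smul_eq_zero.1 hv).resolve_right hv0) htop
    obtain ⟨c', hc', hdiv⟩ := exists_evalTwist_eq_mul_twist_sub_of_mem_ker σ hv hv0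
    have hbot : ker (twist σ γ₂ - (γ₁ * σ v / v) • 1) = ⊥ :=
      ker_twist_sub_eq_bot σ hv0 (div_mul_cancel₀ _ hv0) h
    have hle₁ := finrank_ker_comp_le (twist σ γ₁ - (γ₁ * σ v / v) • 1) (evalTwist σ γ₁ c')
    have hle₂ := finrank_ker_comp_le (twist σ γ₂ - (γ₁ * σ v / v) • 1) (evalTwist σ γ₂ c')
    have hone := finrank_ker_twist_sub_le_one σ h₁ (γ₁ * σ v / v)
    have hc'0 : c' ≠ 0 := fun h0 => htop (by rw [← hc', h0, Pi.zero_apply])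
    have := ih h₁ h₂ h c' hc'0
    rw [hbot, finrank_bot] at hle₂
    rw [← Module.End.mul_eq_comp, ← hdiv] at hle₁ hle₂
    omega

end Skew

open Skew

theorem alph_eq_linearCombination {F : Type*} [Field F] (K : Subfield F) {k : ℕ} (x : K)
    (b : Fin (2 * k) → F) :
    alph k (x : F) b =
      Fintype.linearCombination K (b ∘ Fin.castLE (Nat.le_mul_of_pos_left k two_pos))
        (fun j => x ^ (j : ℕ)) := by
  simp [alph, Fintype.linearCombination_apply, Subfield.smul_def]

theorem bet_eq_linearCombination {F : Type*} [Field F] (K : Subfield F) {k : ℕ} (x : K)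
    (b : Fin (2 * k) → F) :
    bet k (x : F) b = Fintype.linearCombination K b (fun j => x ^ (j : ℕ)) := by
  simp [bet, Fintype.linearCombination_apply, Subfield.smul_def]

section Construction

variable {F : Type*} [Field F] (σ : F →+* F)

theorem skewN_mul_eq_twist_pow_apply {q : ℕ} (hσ : ∀ x, σ x = x ^ q) (hq : q ≠ 0)
    (γ x : F) (r : ℕ) : skewN q r (x ^ (q - 1) * γ) * x = (twist σ γ ^ r) x := by
  induction r with
  | zero => simp [skewN]
  | succ r ih =>
    rw [pow_succ', Module.End.mul_apply, ← ih, twist_apply, hσ, skewN, mul_pow,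
      ← pow_sub_one_mul hq x]
    ring

theorem vecMul_G0mat_apply {q k n : ℕ} (hσ : ∀ x, σ x = x ^ q) (hq : q ≠ 0) (lam : Fin n → F)
    (b : Fin (2 * k) → F) (c : Fin k → F) (i : Fin n) :
    (c ᵥ* G0mat q k n lam b) i = evalTwist σ 1 c (alph k (lam i) b) := by
  simp [vecMul, dotProduct, G0mat, evalTwist, ← skewN_mul_eq_twist_pow_apply σ hσ hq]

theorem vecMul_G1mat_apply {q k n : ℕ} (hσ : ∀ x, σ x = x ^ q) (hq : q ≠ 0) (γ : F)
    (lam : Fin n → F) (b : Fin (2 * k) → F) (c : Fin k → F) (i : Fin n) :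
    (c ᵥ* G1mat q k n γ lam b) i = evalTwist σ γ c (bet k (lam i) b) := by
  simp [vecMul, dotProduct, G1mat, evalTwist, ← skewN_mul_eq_twist_pow_apply σ hσ hq]

variable [FiniteDimensional (fixedField σ) F] {k n : ℕ} {b : Fin (2 * k) → F}
  (hb : LinearIndependent (fixedField σ) b) {lam : Fin n → fixedField σ}
  (hlam : Function.Injective lam)
include hb hlam

theorem card_le_finrank_ker_evalTwist_of_alph {S : Finset (Fin n)} (hS : S.card ≤ k)
    {c : Fin k → F} (h : ∀ i ∈ S, evalTwist σ 1 c (alph k (lam i) b) = 0) :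
    S.card ≤ finrank (fixedField σ) (ker (evalTwist σ 1 c)) :=
  card_le_finrank_ker_of_forall_pow hlam.injOn hS _
    (LinearIndependent.fintypeLinearCombination_injective
      (hb.comp _ (Fin.castLE_injective (Nat.le_mul_of_pos_left k two_pos)))) _
    fun i hi => by rw [← alph_eq_linearCombination]; exact h i hi

theorem card_le_finrank_ker_evalTwist_add_of_bet {S : Finset (Fin n)} (hS : S.card ≤ 2 * k)
    {γ : F} {c d : Fin k → F}
    (h : ∀ i ∈ S, evalTwist σ γ c (bet k (lam i) b) + evalTwist σ 1 d (alph k (lam i) b) = 0) :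
    S.card ≤ finrank (fixedField σ) (ker (evalTwist σ γ c)) + k := by
  have hk : k ≤ 2 * k := by omega
  set eβ := Fintype.linearCombination (fixedField σ) b
  set eα := Fintype.linearCombination (fixedField σ) (b ∘ Fin.castLE hk)
  set π := LinearMap.funLeft (fixedField σ) (fixedField σ) (Fin.castLE hk)
  calc S.card
      ≤ finrank (fixedField σ) (ker (evalTwist σ γ c ∘ₗ eβ + (evalTwist σ 1 d ∘ₗ eα) ∘ₗ π)) :=
        card_le_finrank_ker_of_forall_pow hlam.injOn hS LinearMap.id Function.injective_id _
          fun i hi => by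
            rw [← h i hi, bet_eq_linearCombination, alph_eq_linearCombination]
            rfl
    _ ≤ finrank (fixedField σ) (ker (evalTwist σ γ c)) + k := by
        have := finrank_ker_add_comp_le eβ hb.fintypeLinearCombination_injective
          (evalTwist σ γ c) π (evalTwist σ 1 d ∘ₗ eα)
        rwa [Module.finrank_fin_fun] at this

theorem eq_zero_of_forall_evalTwist_alph_bet {γ : F} (hγ : γ ≠ 0) (hconj : ¬ IsConj σ 1 γ)
    {A B : Finset (Fin n)} (hA : A.card ≤ k) (hB : B.card = 2 * k - A.card) {c d : Fin k → F}
    (hcA : ∀ i ∈ A, evalTwist σ 1 c (alph k (lam i) b) = 0)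
    (hcdB : ∀ i ∈ B, evalTwist σ γ c (bet k (lam i) b) + evalTwist σ 1 d (alph k (lam i) b) = 0) :
    c = 0 ∧ d = 0 := by
  have hc : c = 0 := by
    by_contra hc
    have hA' := card_le_finrank_ker_evalTwist_of_alph σ hb hlam hA hcA
    have hB' := card_le_finrank_ker_evalTwist_add_of_bet σ hb hlam (by omega) hcdB
    have := finrank_ker_evalTwist_add_lt σ one_ne_zero hγ hconj c hc
    omega
  refine ⟨hc, by_contra fun hd => ?_⟩
  obtain ⟨S, hSB, hS⟩ := Finset.exists_subset_card_eq (show k ≤ B.card by omega)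
  have hS' := card_le_finrank_ker_evalTwist_of_alph σ hb hlam hS.le fun i hi => by
    simpa [hc, evalTwist_zero] using hcdB i (hSB hi)
  have := finrank_ker_evalTwist_add_lt σ one_ne_zero hγ hconj d hd
  omega

end Construction

section FiniteField

variable {F : Type*} [Field F] [Fintype F]

theorem ne_zero_of_orderOf_eq_card_sub_one {γ : F} (hγ : orderOf γ = Fintype.card F - 1) :
    γ ≠ 0 := by
  rintro rfl
  have := Fintype.one_lt_card (α := F)
  rw [orderOf_eq_zero_iff'.2 fun n hn h => by simp [zero_pow hn.ne'] at h] at hγ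
  omega

theorem ne_pow_of_orderOf_eq_card_sub_one {γ : F} (hγ : orderOf γ = Fintype.card F - 1) {d : ℕ}
    (hd : 2 ≤ d) (hdvd : d ∣ Fintype.card F - 1) (u : F) : γ ≠ u ^ d := by
  rintro rfl
  obtain ⟨e, he⟩ := hdvd
  have hu : u ≠ 0 := fun hu =>
    ne_zero_of_orderOf_eq_card_sub_one hγ (by rw [hu, zero_pow (by omega)])
  have hN : 0 < Fintype.card F - 1 := Nat.sub_pos_of_lt Fintype.one_lt_card
  have h1 : (u ^ d) ^ e = 1 := by
    rw [← pow_mul, ← he]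
    exact FiniteField.pow_card_sub_one_eq_one u hu
  have he0 : 0 < e := Nat.pos_of_ne_zero (by rintro rfl; omega)
  have := Nat.le_of_dvd he0 (hγ ▸ orderOf_dvd_of_pow_eq_one h1)
  nlinarith

theorem exists_ringHom_apply_eq_pow {q m : ℕ} (hq : IsPrimePow q)
    (hF : Fintype.card F = q ^ m) : ∃ σ : F →+* F, ∀ x, σ x = x ^ q := by
  obtain ⟨p, s, hp, -, rfl⟩ := hq
  have := Fact.mk hp.nat_prime
  have : CharP F p := charP_of_card_eq_prime_pow (hF.trans (pow_mul p s m).symm)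
  exact ⟨iterateFrobenius F p s, iterateFrobenius_def p s⟩

theorem not_isConj_one_of_orderOf_eq {σ : F →+* F} {q m : ℕ} (hσ : ∀ x, σ x = x ^ q)
    (hq : 3 ≤ q) (hF : Fintype.card F = q ^ m) {γ : F} (hγ : orderOf γ = q ^ m - 1) :
    ¬ IsConj σ 1 γ := by
  rintro ⟨w, hw, h⟩
  rw [one_mul, hσ, ← pow_sub_one_mul (by omega) w] at h
  refine ne_pow_of_orderOf_eq_card_sub_one (hF ▸ hγ) (d := q - 1) (by omega) ?_ w
    (mul_right_cancel₀ hw h).symm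
  rw [hF]
  simpa using Nat.sub_dvd_pow_sub_pow q 1 m

end FiniteField

end

theorem construction_truncated_minors_nonzero_general (q k n : ℕ)
    (hq : IsPrimePow q) (hq3 : 3 ≤ q)
    (F : Type*) [Field F] [Fintype F] (hF : Fintype.card F = q ^ (2 * k))
    (γ : F) (hγ : orderOf γ = q ^ (2 * k) - 1)
    (lam : Fin n → F) (hlam : Function.Injective lam) (hlamq : ∀ i, (lam i) ^ q = lam i)
    (b : Fin (2 * k) → F)
    (hbi : ∀ c : Fin (2 * k) → F, (∀ j, (c j) ^ q = c j) → ∑ j, c j * b j = 0 → ∀ j, c j = 0)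
    (A B : Finset (Fin n)) (hA : A.card ≤ k) (hB : B.card = 2 * k - A.card) :
    ∀ e : (Fin k ⊕ Fin k) ≃ ({x // x ∈ A} ⊕ {x // x ∈ B}),
      ((Matrix.fromBlocks
          ((G0mat q k n lam b).submatrix id (fun x : {x // x ∈ A} => (x : Fin n)))
          ((G1mat q k n γ lam b).submatrix id (fun x : {x // x ∈ B} => (x : Fin n)))
          0
          ((G0mat q k n lam b).submatrix id (fun x : {x // x ∈ B} => (x : Fin n)))).submatrix
        id ⇑e).det ≠ 0 := by
  intro e hdet
  obtain ⟨σ, hσ⟩ := exists_ringHom_apply_eq_pow hq hF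
  have hq0 : q ≠ 0 := by omega
  have : FiniteDimensional (Skew.fixedField σ) F := Module.Finite.of_finite
  have hb : LinearIndependent (Skew.fixedField σ) b :=
    Fintype.linearIndependent_iff.2 fun g hg j =>
      Subtype.ext (hbi (fun j => g j) (fun j => (hσ _).symm.trans (g j).2) hg j)
  let lamK : Fin n → Skew.fixedField σ := fun i => ⟨lam i, (hσ _).trans (hlamq i)⟩
  have hlamK : Function.Injective lamK := fun i j h => hlam (congrArg Subtype.val h)
  obtain ⟨w, hw0, hw⟩ := exists_vecMul_eq_zero_iff.2 hdet
  rw [show (id : Fin k ⊕ Fin k → _) = Equiv.refl _ from rfl, submatrix_vecMul_equiv,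
    vecMul_fromBlocks] at hw
  have hcol := fun x => congrFun hw (e.symm x)
  simp only [Equiv.refl_symm, Equiv.coe_refl, CompTriple.comp_eq, vecMul_zero, add_zero,
    Function.comp_apply, Equiv.apply_symm_apply, Pi.zero_apply] at hcol
  obtain ⟨hc, hd⟩ := eq_zero_of_forall_evalTwist_alph_bet σ hb hlamK
    (ne_zero_of_orderOf_eq_card_sub_one (hF ▸ hγ)) (not_isConj_one_of_orderOf_eq hσ hq3 hF hγ)
    hA hB (c := w ∘ Sum.inl) (d := w ∘ Sum.inr)
    (fun i hi => (vecMul_G0mat_apply σ hσ hq0 lam b _ i).symm.trans (hcol (.inl ⟨i, hi⟩)))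
    (fun i hi => (congrArg₂ (· + ·) (vecMul_G1mat_apply σ hσ hq0 γ lam b _ i)
      (vecMul_G0mat_apply σ hσ hq0 lam b _ i)).symm.trans (hcol (.inr ⟨i, hi⟩)))
  exact hw0 (funext (Sum.rec (congrFun hc) (congrFun hd)))

/-- In Construction 1 with `n > 2k`, for any `A, B ⊆ {1,…,n}` with `|A| ≤ k` and
`|B| = 2k - |A|`, the `2k × 2k` matrix `P = [[G_0|_A, G_1|_B], [0, G_0|_B]]` is
invertible (equivalently, `G_1^c` has the MDP property). -/
theorem construction_truncated_minors_nonzero (q k n : ℕ)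
    (hq : IsPrimePow q) (hq3 : 3 ≤ q) (hqn : n ≤ q) (hk : 0 < k) (h2k : 2 * k < n)
    (F : Type*) [Field F] [Fintype F] (hF : Fintype.card F = q ^ (2 * k))
    (γ : F) (hγ : orderOf γ = q ^ (2 * k) - 1)
    (lam : Fin n → F) (hlam : Function.Injective lam) (hlamq : ∀ i, (lam i) ^ q = lam i)
    (b : Fin (2 * k) → F)
    (hbi : ∀ c : Fin (2 * k) → F, (∀ j, (c j) ^ q = c j) → ∑ j, c j * b j = 0 → ∀ j, c j = 0)
    (hbs : ∀ x : F, ∃ c : Fin (2 * k) → F, (∀ j, (c j) ^ q = c j) ∧ x = ∑ j, c j * b j)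
    (A B : Finset (Fin n)) (hA : A.card ≤ k) (hB : B.card = 2 * k - A.card) :
    ∀ e : (Fin k ⊕ Fin k) ≃ ({x // x ∈ A} ⊕ {x // x ∈ B}),
      ((Matrix.fromBlocks
          ((G0mat q k n lam b).submatrix id (fun x : {x // x ∈ A} => (x : Fin n)))
          ((G1mat q k n γ lam b).submatrix id (fun x : {x // x ∈ B} => (x : Fin n)))
          0
          ((G0mat q k n lam b).submatrix id (fun x : {x // x ∈ B} => (x : Fin n)))).submatrix
        id ⇑e).det ≠ 0 :=
  construction_truncated_minors_nonzero_general q k n hq hq3 F hF γ hγ lam hlam hlamq b hbi A B hA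
    hB
end
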